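/- arXiv:1909.05612 — 6 statements merged into one kernel-verified Lean document; each statement's English description precedes it below -/
import Mathlib

section
/- Law of large numbers for the Curie–Weiss model, subcritical/critical case: fix 0 ≤ β ≤ 1. For each N ≥ 1 let (X_1^{(N)},…,X_N^{(N)}) be CW(β,N)-distributed and S_N = ∑_{i=1}^N X_i^{(N)}. Then the laws of S_N/N converge weakly, as N → ∞, to the Dirac measure δ_0 at 0. -/
open MeasureTheory Filter Real Topology ENNReal

/-- The spin value associated to a Boolean: `true ↦ +1`, `false ↦ -1`. -/
noncomputable def spin (b : Bool) : ℝ := if b then 1 else -1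

/-- The (unnormalized) Curie–Weiss Boltzmann weight of a configuration. -/
noncomputable def cwWeight (β : ℝ) (N : ℕ) (σ : Fin N → Bool) : ℝ :=
  Real.exp (β / (2 * N) * (∑ i, spin (σ i)) ^ 2)

/-- The Curie–Weiss partition function. -/
noncomputable def cwZ (β : ℝ) (N : ℕ) : ℝ :=
  ∑ σ : Fin N → Bool, cwWeight β N σ

/-- Expectation with respect to the Curie–Weiss distribution `CW(β,N)`. -/
noncomputable def cwExp (β : ℝ) (N : ℕ) (f : (Fin N → Bool) → ℝ) : ℝ :=
  (∑ σ : Fin N → Bool, cwWeight β N σ * f σ) / cwZ β N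

/-- Law on `ℝ` of the observable `g` under the Curie–Weiss distribution `CW(β,N)`. -/
noncomputable def cwLaw (β : ℝ) (N : ℕ) (g : (Fin N → Bool) → ℝ) : Measure ℝ :=
  ∑ σ : Fin N → Bool, ENNReal.ofReal (cwWeight β N σ / cwZ β N) • Measure.dirac (g σ)

/-- The correlation `E_{β,N}(X_1 ⋯ X_ℓ)` of the first `ℓ` spins. -/
noncomputable def cwCorr (β : ℝ) (N ℓ : ℕ) : ℝ :=
  cwExp β N (fun σ => ∏ j ∈ Finset.univ.filter (fun j : Fin N => (j : ℕ) < ℓ), spin (σ j))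

section CWaux
open Set
/-- If `f 0 = 0` and `f` has nonnegative derivative on `[0,1)`, then `f ≥ 0` there. -/
lemma nonneg_of_deriv {f f' : ℝ → ℝ} (h0 : f 0 = 0)
    (hder : ∀ t ∈ Ico (0:ℝ) 1, HasDerivAt f (f' t) t)
    (hnn : ∀ t ∈ Ico (0:ℝ) 1, 0 ≤ f' t)
    {x : ℝ} (hx0 : 0 ≤ x) (hx1 : x < 1) : 0 ≤ f x := by
  have hsub : Icc (0:ℝ) x ⊆ Ico (0:ℝ) 1 := fun t ht => ⟨ht.1, lt_of_le_of_lt ht.2 hx1⟩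
  have hmono : MonotoneOn f (Icc (0:ℝ) x) := by
    apply monotoneOn_of_hasDerivWithinAt_nonneg (convex_Icc 0 x)
      (f' := f')
    · intro t ht
      exact ((hder t (hsub ht)).continuousAt).continuousWithinAt
    · intro t ht
      rw [interior_Icc] at ht
      exact ((hder t (hsub (Ioo_subset_Icc_self ht))).hasDerivWithinAt)
    · intro t ht
      rw [interior_Icc] at ht
      exact hnn t (hsub (Ioo_subset_Icc_self ht))
  have := hmono (left_mem_Icc.2 hx0) (right_mem_Icc.2 hx0) hx0
  linarith

lemma aux_atanh {x : ℝ} (hx0 : 0 ≤ x) (hx1 : x < 1) :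
    x + x^3/3 ≤ (Real.log (1+x) - Real.log (1-x))/2 := by
  have key : 0 ≤ (Real.log (1+x) - Real.log (1-x))/2 - (x + x^3/3) := by
    apply nonneg_of_deriv
      (f := fun t => (Real.log (1+t) - Real.log (1-t))/2 - (t + t^3/3))
      (f' := fun t => (1/(1+t) - (-1)/(1-t))/2 - (1 + 3*t^2/3)) (by simp)
    · intro t ht
      obtain ⟨ht0, ht1⟩ := ht
      have h1 : (0:ℝ) < 1 + t := by linarith
      have h2 : (0:ℝ) < 1 - t := by linarith
      have d1 : HasDerivAt (fun t : ℝ => Real.log (1+t)) (1/(1+t)) t := by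
        simpa using ((hasDerivAt_id t).const_add (1:ℝ)).log h1.ne'
      have d2 : HasDerivAt (fun t : ℝ => Real.log (1-t)) (-1/(1-t)) t := by
        simpa using ((hasDerivAt_id t).const_sub (1:ℝ)).log h2.ne'
      have d3 : HasDerivAt (fun t : ℝ => t + t^3/3) (1 + 3*t^2/3) t := by
        exact ((hasDerivAt_id' t).add ((hasDerivAt_pow 3 t).div_const 3)).congr_deriv (by norm_num)
      exact ((d1.sub d2).div_const 2).sub d3
    · rintro t ⟨ht0, ht1⟩
      have h1 : (0:ℝ) < 1 + t := by linarith
      have h2 : (0:ℝ) < 1 - t := by linarith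
      have heq : (1/(1+t) - (-1)/(1-t))/2 - (1 + 3*t^2/3) = t^4/((1+t)*(1-t)) := by
        field_simp
        ring
      rw [heq]
      positivity
    · exact hx0
    · exact hx1
  linarith

lemma auxJ {x : ℝ} (hx0 : 0 ≤ x) (hx1 : x < 1) :
    x^2/2 + x^6/18 ≤ (1+x)/2 * Real.log (1+x) + (1-x)/2 * Real.log (1-x) := by
  have key : 0 ≤ (1+x)/2 * Real.log (1+x) + (1-x)/2 * Real.log (1-x) - (x^2/2 + x^6/18) := by
    apply nonneg_of_deriv
      (f := fun t => (1+t)/2 * Real.log (1+t) + (1-t)/2 * Real.log (1-t) - (t^2/2 + t^6/18))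
      (f' := fun t => (1/2 * Real.log (1+t) + (1+t)/2 * (1/(1+t)))
        + ((-1)/2 * Real.log (1-t) + (1-t)/2 * (-1/(1-t))) - (2*t/2 + 6*t^5/18)) (by simp)
    · intro t ht
      obtain ⟨ht0, ht1⟩ := ht
      have h1 : (0:ℝ) < 1 + t := by linarith
      have h2 : (0:ℝ) < 1 - t := by linarith
      have d1 : HasDerivAt (fun t : ℝ => Real.log (1+t)) (1/(1+t)) t := by
        simpa using ((hasDerivAt_id t).const_add (1:ℝ)).log h1.ne'
      have d2 : HasDerivAt (fun t : ℝ => Real.log (1-t)) (-1/(1-t)) t := by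
        simpa using ((hasDerivAt_id t).const_sub (1:ℝ)).log h2.ne'
      have d1' : HasDerivAt (fun t : ℝ => (1+t)/2) (1/2) t := by
        simpa using ((hasDerivAt_id t).const_add (1:ℝ)).div_const 2
      have d2' : HasDerivAt (fun t : ℝ => (1-t)/2) ((-1)/2) t := by
        simpa using ((hasDerivAt_id t).const_sub (1:ℝ)).div_const 2
      have d3 : HasDerivAt (fun t : ℝ => t^2/2 + t^6/18) (2*t/2 + 6*t^5/18) t := by
        have := ((hasDerivAt_pow 2 t).div_const 2).add ((hasDerivAt_pow 6 t).div_const 18)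
        exact this.congr_deriv (by norm_num)
      exact ((d1'.mul d1).add (d2'.mul d2)).sub d3
    · rintro t ⟨ht0, ht1⟩
      have h1 : (0:ℝ) < 1 + t := by linarith
      have h2 : (0:ℝ) < 1 - t := by linarith
      have heq : (1/2 * Real.log (1+t) + (1+t)/2 * (1/(1+t)))
          + ((-1)/2 * Real.log (1-t) + (1-t)/2 * (-1/(1-t))) - (2*t/2 + 6*t^5/18)
          = (Real.log (1+t) - Real.log (1-t))/2 - (t + t^3/3) + (t^3/3 - t^5/3) := by
        field_simp
        ring
      rw [heq]
      have h3 := aux_atanh ht0 ht1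
      have h4 : t^3/3 - t^5/3 = t^3*(1-t^2)/3 := by ring
      have h5 : 0 ≤ t^3*(1-t^2)/3 := by
        have : (0:ℝ) ≤ 1 - t^2 := by nlinarith
        positivity
      linarith
    · exact hx0
    · exact hx1
  linarith

lemma auxJ' {m : ℝ} (hm1 : -1 < m) (hm2 : m < 1) :
    m^2/2 + m^6/18 ≤ (1+m)/2 * Real.log (1+m) + (1-m)/2 * Real.log (1-m) := by
  rcases le_or_gt 0 m with h | h
  · exact auxJ h hm2
  · have h1 : (1:ℝ) + -m = 1 - m := by ring
    have h2 : (1:ℝ) - -m = 1 + m := by ring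
    have := auxJ (x := -m) (by linarith) (by linarith)
    rw [h1, h2] at this
    nlinarith [this]

lemma binom_term_le_one (N k : ℕ) (hk : k ≤ N) {p : ℝ} (hp : 0 ≤ p) (hp1 : p ≤ 1) :
    (N.choose k : ℝ) * (p^k * (1-p)^(N-k)) ≤ 1 := by
  have hq : (0:ℝ) ≤ 1 - p := by linarith
  have hexp : ((p + (1-p)))^N = ∑ j ∈ Finset.range (N+1), p^j * (1-p)^(N-j) * (N.choose j) := by
    exact add_pow p (1-p) N
  have h1 : p^k * (1-p)^(N-k) * (N.choose k)
      ≤ ∑ j ∈ Finset.range (N+1), p^j * (1-p)^(N-j) * (N.choose j) := by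
    apply Finset.single_le_sum (f := fun j => p^j * (1-p)^(N-j) * (N.choose j))
    · intro j _
      positivity
    · exact Finset.mem_range.2 (Nat.lt_succ_of_le hk)
  have h2 : (p + (1-p))^N = 1 := by norm_num
  calc (N.choose k : ℝ) * (p^k * (1-p)^(N-k)) = p^k * (1-p)^(N-k) * (N.choose k) := by ring
    _ ≤ 1 := by rw [hexp] at h2; linarith

set_option maxHeartbeats 1000000 in
lemma choose_weight_bound {β : ℝ} (hβ0 : 0 ≤ β) (hβ1 : β ≤ 1) {N k : ℕ} (hN : 1 ≤ N)
    (hk : k ≤ N) :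
    (N.choose k : ℝ) * Real.exp (β / (2*N) * (2*k - (N:ℝ))^2)
      ≤ 2^N * Real.exp (-(N:ℝ) * ((2*k - (N:ℝ))/N)^6 / 18) := by
  have hn : (0:ℝ) < N := by exact_mod_cast hN
  set n : ℝ := (N:ℝ) with hn_def
  set m : ℝ := (2*k - n)/n with hm_def
  have hkn : (k:ℝ) ≤ n := by rw [hn_def]; exact_mod_cast hk
  have hk0 : (0:ℝ) ≤ (k:ℝ) := by positivity
  have hm_le : m ≤ 1 := by
    rw [hm_def, div_le_one hn]; linarith
  have hm_ge : -1 ≤ m := by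
    rw [hm_def, le_div_iff₀ hn]; linarith
  have hsq : (2*k - n)^2 = m^2 * n^2 := by
    rw [hm_def]; field_simp
  have hexp_le : β / (2*n) * (2*k - n)^2 ≤ n * m^2 / 2 := by
    rw [hsq]
    have h1 : β / (2*n) * (m^2*n^2) = (β * m^2 * n)/2 := by field_simp
    rw [h1]
    have : β * m^2 * n ≤ 1 * m^2 * n := by
      apply mul_le_mul_of_nonneg_right _ hn.le
      nlinarith [sq_nonneg m]
    nlinarith
  have hlog2 : (0.6931471803 : ℝ) < Real.log 2 := Real.log_two_gt_d9
  have h2pow : (2:ℝ)^N = Real.exp (n * Real.log 2) := by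
    rw [hn_def, Real.exp_nat_mul, Real.exp_log two_pos]
  have hn1 : (1:ℝ) ≤ n := by rw [hn_def]; exact_mod_cast hN
  -- key: (choose) * exp(n m²/2) ≤ 2^N exp(-n m⁶/18)
  have key : (N.choose k : ℝ) * Real.exp (n * m^2 / 2)
      ≤ 2^N * Real.exp (-n * m^6 / 18) := by
    rcases Nat.eq_zero_or_pos k with hk0' | hkpos
    · -- k = 0 : m = -1
      have hm1 : m = -1 := by
        rw [hm_def, hk0', hn_def]
        push_cast
        field_simp
        ring
      rw [hk0']
      simp only [Nat.choose_zero_right, Nat.cast_one, one_mul, hm1]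
      rw [h2pow, ← Real.exp_add]
      apply Real.exp_le_exp.2
      norm_num
      nlinarith
    rcases eq_or_lt_of_le hk with hkN | hkN
    · -- k = N : m = 1
      have hm1 : m = 1 := by
        rw [hm_def, hkN, hn_def]
        field_simp
        ring
      rw [hkN]
      simp only [Nat.choose_self, Nat.cast_one, one_mul, hm1]
      rw [h2pow, ← Real.exp_add]
      apply Real.exp_le_exp.2
      norm_num
      nlinarith
    · -- 0 < k < N
      have hknR : (k:ℝ) < n := by rw [hn_def]; exact_mod_cast hkN
      have hkposR : (0:ℝ) < (k:ℝ) := by exact_mod_cast hkpos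
      set p : ℝ := (k:ℝ)/n with hp_def
      have hp0 : 0 < p := by positivity
      have hp1 : p < 1 := by rw [hp_def, div_lt_one hn]; exact hknR
      have hq0 : 0 < 1 - p := by linarith
      have h1m : 1 + m = 2*p := by rw [hm_def, hp_def]; field_simp; ring
      have h2m : 1 - m = 2*(1-p) := by rw [hm_def, hp_def]; field_simp; ring
      have hm_lt1 : m < 1 := by nlinarith
      have hm_gt1 : -1 < m := by nlinarith
      have hchoose : (N.choose k : ℝ)
          ≤ Real.exp (-((k:ℝ) * Real.log p + (n-k) * Real.log (1-p))) := by
        have hb := binom_term_le_one N k hk hp0.le hp1.le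
        have hprod : p^k * (1-p)^(N-k)
            = Real.exp ((k:ℝ) * Real.log p + (n-k) * Real.log (1-p)) := by
          rw [Real.exp_add, Real.exp_nat_mul, Real.exp_log hp0]
          have hc : (n - (k:ℝ)) = ((N - k : ℕ) : ℝ) := by
            rw [hn_def, Nat.cast_sub hk]
          rw [hc, Real.exp_nat_mul, Real.exp_log hq0]
        rw [hprod] at hb
        calc (N.choose k : ℝ)
            = (N.choose k : ℝ) * Real.exp ((k:ℝ) * Real.log p + (n-k) * Real.log (1-p))
              * Real.exp (-((k:ℝ) * Real.log p + (n-k) * Real.log (1-p))) := by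
              rw [mul_assoc, ← Real.exp_add, add_neg_cancel, Real.exp_zero, mul_one]
          _ ≤ 1 * Real.exp (-((k:ℝ) * Real.log p + (n-k) * Real.log (1-p))) :=
              mul_le_mul_of_nonneg_right hb (Real.exp_pos _).le
          _ = _ := one_mul _
      have hp_eq : p = (1+m)/2 := by linarith
      have hq_eq : 1 - p = (1-m)/2 := by linarith
      have h1m0 : (0:ℝ) < 1 + m := by linarith
      have h2m0 : (0:ℝ) < 1 - m := by linarith
      have hlogp : Real.log p = Real.log (1+m) - Real.log 2 := by
        rw [hp_eq, Real.log_div h1m0.ne' two_ne_zero]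
      have hlogq : Real.log (1-p) = Real.log (1-m) - Real.log 2 := by
        rw [hq_eq, Real.log_div h2m0.ne' two_ne_zero]
      have hkm : (k:ℝ) = n*(1+m)/2 := by
        rw [h1m, hp_def]; field_simp
      have hJ := auxJ' hm_gt1 hm_lt1
      have hJn := mul_le_mul_of_nonneg_left hJ hn.le
      calc (N.choose k : ℝ) * Real.exp (n * m^2 / 2)
          ≤ Real.exp (-((k:ℝ) * Real.log p + (n-k) * Real.log (1-p)))
              * Real.exp (n * m^2/2) :=
            mul_le_mul_of_nonneg_right hchoose (Real.exp_pos _).le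
        _ = Real.exp (n * m^2/2 - ((k:ℝ) * Real.log p + (n-k) * Real.log (1-p))) := by
            rw [← Real.exp_add]; ring_nf
        _ ≤ 2^N * Real.exp (-n * m^6 / 18) := by
            rw [h2pow, ← Real.exp_add]
            apply Real.exp_le_exp.2
            rw [hlogp, hlogq, hkm]
            nlinarith [hJn]
  calc (N.choose k : ℝ) * Real.exp (β / (2*n) * (2*(k:ℝ) - n)^2)
      ≤ (N.choose k : ℝ) * Real.exp (n * m^2 / 2) :=
        mul_le_mul_of_nonneg_left (Real.exp_le_exp.2 hexp_le) (Nat.cast_nonneg _)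
    _ ≤ 2^N * Real.exp (-n * m^6 / 18) := key

lemma fiber_card (N j : ℕ) :
    (Finset.univ.filter
      (fun σ : Fin N → Bool => (Finset.univ.filter (fun i => σ i = true)).card = j)).card
    = N.choose j := by
  have h : (Finset.univ.filter
      (fun σ : Fin N → Bool => (Finset.univ.filter (fun i => σ i = true)).card = j)).card
      = (Finset.powersetCard j (Finset.univ : Finset (Fin N))).card := by
    apply Finset.card_bij (fun σ _ => Finset.univ.filter (fun i => σ i = true))
    · intro σ hσ
      rw [Finset.mem_filter] at hσ
      exact Finset.mem_powersetCard.2 ⟨Finset.filter_subset _ _, hσ.2⟩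
    · intro σ₁ h₁ σ₂ h₂ heq
      funext i
      have : (i ∈ Finset.univ.filter (fun i => σ₁ i = true))
          ↔ (i ∈ Finset.univ.filter (fun i => σ₂ i = true)) := by rw [heq]
      simp only [Finset.mem_filter, Finset.mem_univ, true_and] at this
      cases h1 : σ₁ i <;> cases h2 : σ₂ i <;> simp_all
    · intro s hs
      rw [Finset.mem_powersetCard] at hs
      refine ⟨fun i => decide (i ∈ s), ?_, ?_⟩
      · rw [Finset.mem_filter]
        refine ⟨Finset.mem_univ _, ?_⟩
        rw [← hs.2]
        congr 1
        ext i
        simp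
      · ext i
        simp
  rw [h, Finset.card_powersetCard, Finset.card_univ, Fintype.card_fin]

lemma sum_spin (N : ℕ) (σ : Fin N → Bool) :
    ∑ i, spin (σ i) = 2*((Finset.univ.filter (fun i => σ i = true)).card : ℝ) - N := by
  have h1 : ∀ i, spin (σ i) = (if σ i = true then (2:ℝ) else 0) - 1 := by
    intro i; cases h : σ i <;> simp [spin, h] <;> norm_num
  rw [Finset.sum_congr rfl (fun i _ => h1 i), Finset.sum_sub_distrib]
  rw [← Finset.sum_filter]
  simp [Finset.sum_const, Finset.card_univ, mul_comm]


lemma cwWeight_pos (β : ℝ) (N : ℕ) (σ : Fin N → Bool) : 0 < cwWeight β N σ :=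
  Real.exp_pos _

lemma cwZ_ge {β : ℝ} (hβ0 : 0 ≤ β) (N : ℕ) : (2:ℝ)^N ≤ cwZ β N := by
  have h1 : ∀ σ : Fin N → Bool, (1:ℝ) ≤ cwWeight β N σ := by
    intro σ
    rw [cwWeight]
    apply Real.one_le_exp
    apply mul_nonneg (div_nonneg hβ0 (by positivity)) (sq_nonneg _)
  have hcard : Fintype.card (Fin N → Bool) = 2^N := by simp
  calc (2:ℝ)^N = ((Fintype.card (Fin N → Bool) : ℕ) : ℝ) := by rw [hcard]; push_cast; ring
    _ = ∑ _σ : Fin N → Bool, (1:ℝ) := by rw [Finset.sum_const, Finset.card_univ]; simp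
    _ ≤ cwZ β N := Finset.sum_le_sum (fun σ _ => h1 σ)

lemma cwZ_pos {β : ℝ} (hβ0 : 0 ≤ β) (N : ℕ) : 0 < cwZ β N :=
  lt_of_lt_of_le (by positivity) (cwZ_ge hβ0 N)

lemma bad_sum {β : ℝ} (hβ0 : 0 ≤ β) (hβ1 : β ≤ 1) {N : ℕ} (hN : 1 ≤ N) {ε : ℝ} (hε : 0 < ε)
    [DecidablePred fun σ : Fin N → Bool => ε ≤ |(∑ i, spin (σ i)) / (N:ℝ)|] :
    ∑ σ ∈ Finset.univ.filter (fun σ : Fin N → Bool => ε ≤ |(∑ i, spin (σ i)) / (N:ℝ)|),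
        cwWeight β N σ
      ≤ ((N:ℝ)+1) * 2^N * Real.exp (-(N:ℝ) * ε^6 / 18) := by
  classical
  have hnpos : (0:ℝ) < N := by exact_mod_cast hN
  set B := Finset.univ.filter (fun σ : Fin N → Bool => ε ≤ |(∑ i, spin (σ i)) / (N:ℝ)|) with hB
  have hmaps : ∀ σ ∈ B, (Finset.univ.filter (fun i => σ i = true)).card ∈ Finset.range (N+1) := by
    intro σ _
    rw [Finset.mem_range]
    exact Nat.lt_succ_of_le (le_trans (Finset.card_filter_le _ _) (by simp))
  rw [← Finset.sum_fiberwise_of_maps_to hmaps (cwWeight β N)]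
  have hbound : ∀ j ∈ Finset.range (N+1),
      ∑ σ ∈ B.filter (fun σ => (Finset.univ.filter (fun i => σ i = true)).card = j),
        cwWeight β N σ ≤ 2^N * Real.exp (-(N:ℝ) * ε^6 / 18) := by
    intro j hj
    rcases Finset.eq_empty_or_nonempty
        (B.filter (fun σ : Fin N → Bool => (Finset.univ.filter (fun i => σ i = true)).card = j)) with he | hne
    · rw [he, Finset.sum_empty]
      positivity
    · obtain ⟨σ₀, hσ₀⟩ := hne
      rw [Finset.mem_filter] at hσ₀
      obtain ⟨hσ₀B, hσ₀j⟩ := hσ₀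
      rw [hB, Finset.mem_filter] at hσ₀B
      have hjN : j ≤ N := Nat.lt_succ_iff.1 (Finset.mem_range.1 hj)
      -- the common magnetization value
      have hmag : ∀ σ ∈ B.filter (fun σ => (Finset.univ.filter (fun i => σ i = true)).card = j),
          cwWeight β N σ = Real.exp (β / (2*N) * (2*j - (N:ℝ))^2) := by
        intro σ hσ
        rw [Finset.mem_filter] at hσ
        rw [cwWeight, sum_spin, hσ.2]
      rw [Finset.sum_congr rfl hmag, Finset.sum_const, nsmul_eq_mul]
      have hcardle : (B.filter (fun σ => (Finset.univ.filter (fun i => σ i = true)).card = j)).card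
          ≤ N.choose j := by
        rw [← fiber_card N j]
        apply Finset.card_le_card
        intro σ hσ
        rw [Finset.mem_filter] at hσ ⊢
        exact ⟨Finset.mem_univ _, hσ.2⟩
      have hεm : ε ≤ |(2*j - (N:ℝ))/N| := by
        have := hσ₀B.2
        rwa [sum_spin, hσ₀j] at this
      have habs : (0:ℝ) ≤ (2*j - (N:ℝ))/N → True := fun _ => trivial
      have hε6 : ε^6 ≤ ((2*j - (N:ℝ))/N)^6 := by
        calc ε^6 ≤ |(2*j - (N:ℝ))/N|^6 := pow_le_pow_left₀ hε.le hεm 6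
          _ = ((2*j - (N:ℝ))/N)^6 := by
            rw [← abs_pow, abs_of_nonneg (by positivity)]
      calc ((B.filter (fun σ => (Finset.univ.filter (fun i => σ i = true)).card = j)).card : ℝ)
            * Real.exp (β / (2*N) * (2*j - (N:ℝ))^2)
          ≤ (N.choose j : ℝ) * Real.exp (β / (2*N) * (2*j - (N:ℝ))^2) := by
            apply mul_le_mul_of_nonneg_right _ (Real.exp_pos _).le
            exact_mod_cast hcardle
        _ ≤ 2^N * Real.exp (-(N:ℝ) * ((2*j - (N:ℝ))/N)^6 / 18) :=
            choose_weight_bound hβ0 hβ1 hN hjN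
        _ ≤ 2^N * Real.exp (-(N:ℝ) * ε^6 / 18) := by
            apply mul_le_mul_of_nonneg_left _ (by positivity)
            apply Real.exp_le_exp.2
            have : (0:ℝ) ≤ N := hnpos.le
            nlinarith
  calc ∑ j ∈ Finset.range (N+1),
        ∑ σ ∈ B.filter (fun σ => (Finset.univ.filter (fun i => σ i = true)).card = j),
          cwWeight β N σ
      ≤ ∑ _j ∈ Finset.range (N+1), 2^N * Real.exp (-(N:ℝ) * ε^6 / 18) :=
        Finset.sum_le_sum hbound
    _ = ((N:ℝ)+1) * 2^N * Real.exp (-(N:ℝ) * ε^6 / 18) := by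
        rw [Finset.sum_const, Finset.card_range, nsmul_eq_mul]
        push_cast
        ring

open MeasureTheory Filter in
lemma integral_cwLaw (β : ℝ) {N : ℕ} (hZ : 0 < cwZ β N) (g : (Fin N → Bool) → ℝ)
    (f : BoundedContinuousFunction ℝ ℝ) :
    ∫ x, f x ∂(cwLaw β N g) = ∑ σ : Fin N → Bool, (cwWeight β N σ / cwZ β N) * f (g σ) := by
  rw [cwLaw, integral_finset_sum_measure
    (fun σ _ => (f.integrable _).smul_measure ENNReal.ofReal_ne_top)]
  apply Finset.sum_congr rfl
  intro σ _
  rw [integral_smul_measure, integral_dirac,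
    ENNReal.toReal_ofReal (div_nonneg (cwWeight_pos β N σ).le hZ.le), smul_eq_mul]

open Filter in
lemma tends_aux {c : ℝ} (hc : 0 < c) :
    Tendsto (fun N : ℕ => ((N:ℝ)+1) * Real.exp (-c*N)) atTop (nhds 0) := by
  have hx : Tendsto (fun x : ℝ => (x/c+1) * Real.exp (-x)) atTop (nhds 0) := by
    have h2 := tendsto_pow_mul_exp_neg_atTop_nhds_zero 1
    have h3 := Real.tendsto_exp_neg_atTop_nhds_zero
    have h4 := (h2.const_mul (1/c)).add h3
    have heq : (fun x : ℝ => (x/c+1) * Real.exp (-x))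
        = fun x => 1/c * (x^1*Real.exp (-x)) + Real.exp (-x) := by
      funext x; ring
    rw [heq]
    simpa using h4
  have hcN : Tendsto (fun N : ℕ => c*(N:ℝ)) atTop atTop :=
    Tendsto.const_mul_atTop hc tendsto_natCast_atTop_atTop
  apply (hx.comp hcN).congr
  intro N
  simp only [Function.comp_apply]
  rw [mul_div_cancel_left₀ _ hc.ne', neg_mul]

end CWaux

/-- Law of large numbers for the Curie–Weiss model, subcritical/critical case:
for `0 ≤ β ≤ 1` the laws of `S_N / N` converge weakly to the Dirac measure at `0`. -/
theorem cw_lln_subcritical (β : ℝ) (hβ0 : 0 ≤ β) (hβ1 : β ≤ 1) :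
    ∀ f : BoundedContinuousFunction ℝ ℝ,
      Tendsto (fun N : ℕ =>
          ∫ x, f x ∂(cwLaw β N (fun σ => (∑ i, spin (σ i)) / N)))
        atTop (𝓝 (∫ x, f x ∂(Measure.dirac (0 : ℝ)))) := by
  classical
  intro f
  rw [integral_dirac]
  rw [Metric.tendsto_atTop]
  intro δ hδ
  have hcont : ContinuousAt f 0 := f.continuous.continuousAt
  rw [Metric.continuousAt_iff] at hcont
  obtain ⟨ε, hε, hεf⟩ := hcont (δ/2) (by linarith)
  have htail := tends_aux (c := ε^6/18) (by positivity)
  have h2 : Tendsto (fun N : ℕ => 2*‖f‖ * (((N:ℝ)+1) * Real.exp (-(ε^6/18)*N)))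
      atTop (𝓝 0) := by
    simpa using htail.const_mul (2*‖f‖)
  have h3 : ∀ᶠ N : ℕ in atTop,
      2*‖f‖ * (((N:ℝ)+1) * Real.exp (-(ε^6/18)*N)) < δ/2 :=
    h2.eventually (gt_mem_nhds (by linarith))
  obtain ⟨N₀, hN₀⟩ := eventually_atTop.1 (h3.and (eventually_ge_atTop 1))
  refine ⟨N₀, fun N hN => ?_⟩
  obtain ⟨hsmall, hN1⟩ := hN₀ N hN
  have hZ : 0 < cwZ β N := cwZ_pos hβ0 N
  have hnpos : (0:ℝ) < N := by exact_mod_cast hN1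
  rw [integral_cwLaw β hZ _ f, Real.dist_eq]
  set g : (Fin N → Bool) → ℝ := fun σ => (∑ i, spin (σ i))/(N:ℝ) with hg
  set Z := cwZ β N with hZdef
  have hw : ∀ σ : Fin N → Bool, 0 ≤ cwWeight β N σ / Z :=
    fun σ => div_nonneg (cwWeight_pos β N σ).le hZ.le
  have hsum1 : ∑ σ : Fin N → Bool, cwWeight β N σ / Z = 1 := by
    rw [← Finset.sum_div]
    exact div_self hZ.ne'
  have hdiff : ∑ σ : Fin N → Bool, (cwWeight β N σ / Z) * f (g σ) - f 0
      = ∑ σ : Fin N → Bool, (cwWeight β N σ / Z) * (f (g σ) - f 0) := by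
    simp only [mul_sub]
    rw [Finset.sum_sub_distrib, ← Finset.sum_mul, hsum1, one_mul]
  rw [hdiff]
  have habs : |∑ σ : Fin N → Bool, (cwWeight β N σ / Z) * (f (g σ) - f 0)|
      ≤ ∑ σ : Fin N → Bool, (cwWeight β N σ / Z) * |f (g σ) - f 0| := by
    refine (Finset.abs_sum_le_sum_abs _ _).trans ?_
    apply Finset.sum_le_sum
    intro σ _
    rw [abs_mul, abs_of_nonneg (hw σ)]
  have hsplit : ∑ σ : Fin N → Bool, (cwWeight β N σ / Z) * |f (g σ) - f 0|
      = (∑ σ ∈ Finset.univ.filter (fun σ : Fin N → Bool => ε ≤ |g σ|),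
          (cwWeight β N σ / Z) * |f (g σ) - f 0|)
        + ∑ σ ∈ Finset.univ.filter (fun σ : Fin N → Bool => ¬ ε ≤ |g σ|),
          (cwWeight β N σ / Z) * |f (g σ) - f 0| :=
    (Finset.sum_filter_add_sum_filter_not _ _ _).symm
  -- good part
  have hgood : ∑ σ ∈ Finset.univ.filter (fun σ : Fin N → Bool => ¬ ε ≤ |g σ|),
      (cwWeight β N σ / Z) * |f (g σ) - f 0| ≤ δ/2 := by
    calc ∑ σ ∈ Finset.univ.filter (fun σ : Fin N → Bool => ¬ ε ≤ |g σ|),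
        (cwWeight β N σ / Z) * |f (g σ) - f 0|
        ≤ ∑ σ ∈ Finset.univ.filter (fun σ : Fin N → Bool => ¬ ε ≤ |g σ|),
          (cwWeight β N σ / Z) * (δ/2) := by
          apply Finset.sum_le_sum
          intro σ hσ
          rw [Finset.mem_filter] at hσ
          apply mul_le_mul_of_nonneg_left _ (hw σ)
          have hlt : dist (g σ) 0 < ε := by
            rw [Real.dist_eq, sub_zero]
            exact lt_of_not_ge hσ.2
          have := hεf hlt
          rw [Real.dist_eq] at this
          exact this.le
      _ = (δ/2) * ∑ σ ∈ Finset.univ.filter (fun σ : Fin N → Bool => ¬ ε ≤ |g σ|),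
          (cwWeight β N σ / Z) := by rw [Finset.mul_sum]; apply Finset.sum_congr rfl; intros; ring
      _ ≤ (δ/2) * 1 := by
          apply mul_le_mul_of_nonneg_left _ (by linarith)
          rw [← hsum1]
          exact Finset.sum_le_sum_of_subset_of_nonneg (Finset.filter_subset _ _)
            (fun σ _ _ => hw σ)
      _ = δ/2 := mul_one _
  -- bad part
  have hbadsum := bad_sum hβ0 hβ1 hN1 hε
  have hbad : ∑ σ ∈ Finset.univ.filter (fun σ : Fin N → Bool => ε ≤ |g σ|),
      (cwWeight β N σ / Z) * |f (g σ) - f 0|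
      ≤ 2*‖f‖ * (((N:ℝ)+1) * Real.exp (-(ε^6/18)*N)) := by
    have hEeq : Real.exp (-(ε^6/18)*(N:ℝ)) = Real.exp (-(N:ℝ)*ε^6/18) := by
      congr 1; ring
    calc ∑ σ ∈ Finset.univ.filter (fun σ : Fin N → Bool => ε ≤ |g σ|),
        (cwWeight β N σ / Z) * |f (g σ) - f 0|
        ≤ ∑ σ ∈ Finset.univ.filter (fun σ : Fin N → Bool => ε ≤ |g σ|),
          (cwWeight β N σ / Z) * (2*‖f‖) := by
          apply Finset.sum_le_sum
          intro σ _
          apply mul_le_mul_of_nonneg_left _ (hw σ)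
          rw [← Real.dist_eq]
          exact f.dist_le_two_norm _ _
      _ = ((∑ σ ∈ Finset.univ.filter (fun σ : Fin N → Bool => ε ≤ |g σ|),
            cwWeight β N σ) / Z) * (2*‖f‖) := by
          simp only [Finset.sum_div, Finset.sum_mul]
      _ ≤ ((((N:ℝ)+1) * 2^N * Real.exp (-(N:ℝ)*ε^6/18)) / 2^N) * (2*‖f‖) := by
          apply mul_le_mul_of_nonneg_right _ (by positivity)
          apply div_le_div₀ (by positivity) hbadsum (by positivity) (cwZ_ge hβ0 N)
      _ = 2*‖f‖ * (((N:ℝ)+1) * Real.exp (-(ε^6/18)*N)) := by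
          rw [hEeq]
          field_simp
  calc |∑ σ : Fin N → Bool, (cwWeight β N σ / Z) * (f (g σ) - f 0)|
      ≤ ∑ σ : Fin N → Bool, (cwWeight β N σ / Z) * |f (g σ) - f 0| := habs
    _ = _ + _ := hsplit
    _ < δ := by linarith
end

section
/- For every β > 1 there exists a unique t₀ > 0 with tanh(β t₀) = t₀; moreover, with F_β(t) := t²/(2β) − ln cosh(t), the point s₀ = β t₀ is the unique positive critical point of F_β (i.e., the unique s > 0 with s/β = tanh s) and satisfies F_β''(s₀) > 0. -/
open Real

lemma hasDerivAt_tanh' (x : ℝ) :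
    HasDerivAt Real.tanh (1 / Real.cosh x ^ 2) x := by
  have h : HasDerivAt (fun y => Real.sinh y / Real.cosh y)
      ((Real.cosh x * Real.cosh x - Real.sinh x * Real.sinh x) / Real.cosh x ^ 2) x :=
    (Real.hasDerivAt_sinh x).div (Real.hasDerivAt_cosh x) (Real.cosh_pos x).ne'
  have he : (fun y => Real.sinh y / Real.cosh y) = Real.tanh := by
    funext y; rw [Real.tanh_eq_sinh_div_cosh]
  have hnum : Real.cosh x * Real.cosh x - Real.sinh x * Real.sinh x = 1 := by
    have := Real.cosh_sq_sub_sinh_sq x; nlinarith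
  rw [he, hnum] at h
  exact h

lemma deriv_tanh' : deriv Real.tanh = fun x => 1 / Real.cosh x ^ 2 := by
  funext x; exact (hasDerivAt_tanh' x).deriv

lemma tanh_strictConcave : StrictConcaveOn ℝ (Set.Ici (0:ℝ)) Real.tanh := by
  apply strictConcaveOn_of_deriv2_neg (convex_Ici 0)
    (fun x _ => ((hasDerivAt_tanh' x).continuousAt.continuousWithinAt))
  intro x hx
  rw [interior_Ici] at hx
  have hx' : (0:ℝ) < x := hx
  have h2 : deriv (deriv Real.tanh) x
      = -(2 * Real.cosh x ^ 1 * Real.sinh x) / (Real.cosh x ^ 2) ^ 2 := by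
    rw [deriv_tanh']
    have h : HasDerivAt (fun y => 1 / Real.cosh y ^ 2)
        (-(2 * Real.cosh x ^ 1 * Real.sinh x) / (Real.cosh x ^ 2) ^ 2) x := by
      simpa [one_div, div_eq_mul_inv] using (((Real.hasDerivAt_cosh x).fun_pow 2).fun_inv
        (by positivity : Real.cosh x ^ 2 ≠ 0))
    exact h.deriv
  have hit : deriv^[2] Real.tanh x = deriv (deriv Real.tanh) x := by
    simp [Function.iterate_succ, Function.iterate_one]
  rw [hit, h2]
  have hs : 0 < Real.sinh x := Real.sinh_pos_iff.2 hx'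
  have hc : 0 < Real.cosh x := Real.cosh_pos x
  apply div_neg_of_neg_of_pos
  · nlinarith
  · positivity

lemma tanh_gt (x : ℝ) (hx : 0 < x) : x / (1 + x) < Real.tanh x := by
  rw [Real.tanh_eq_sinh_div_cosh]
  have hc : 0 < Real.cosh x := Real.cosh_pos x
  rw [div_lt_div_iff₀ (by linarith) hc]
  have hE : Real.exp (-x) = (Real.exp x)⁻¹ := Real.exp_neg x
  have hEpos : 0 < Real.exp x := Real.exp_pos x
  have key : 2 * x + 1 < Real.exp x * Real.exp x := by
    have h := Real.add_one_lt_exp (x := 2 * x) (by linarith)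
    have h2x : (2:ℝ) * x = x + x := two_mul x
    rw [h2x, Real.exp_add] at h
    linarith
  have hsinh := Real.sinh_eq x
  have hcs := Real.cosh_sub_sinh x
  rw [hE] at hsinh hcs
  have h1 : Real.cosh x = Real.sinh x + (Real.exp x)⁻¹ := by linarith
  have h2 : (Real.exp x)⁻¹ * Real.exp x = 1 := inv_mul_cancel₀ hEpos.ne'
  rw [h1, hsinh]
  have hEinv : 0 < (Real.exp x)⁻¹ := by positivity
  nlinarith [mul_pos hx hEpos, mul_pos hx hEinv]

lemma tanh_lt_one' (x : ℝ) : Real.tanh x < 1 := by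
  rw [Real.tanh_eq_sinh_div_cosh]
  exact (div_lt_one (Real.cosh_pos x)).2 (Real.sinh_lt_cosh x)

lemma fixed_unique (β : ℝ) (hβ : 1 < β) {a b : ℝ} (ha : 0 < a) (hb : 0 < b)
    (hfa : Real.tanh (β * a) = a) (hfb : Real.tanh (β * b) = b) : a = b := by
  by_contra hne
  wlog hab : a < b generalizing a b
  · exact this hb ha hfb hfa (Ne.symm hne) (lt_of_le_of_ne (not_lt.1 hab) (Ne.symm hne))
  have hβ0 : 0 < β := by linarith
  set lam := a / b with hlam
  have hl0 : 0 < lam := div_pos ha hb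
  have hl1 : lam < 1 := (div_lt_one hb).2 hab
  have hmem0 : (0:ℝ) ∈ Set.Ici (0:ℝ) := Set.mem_Ici.2 le_rfl
  have hmemb : β * b ∈ Set.Ici (0:ℝ) := le_of_lt (by positivity : (0:ℝ) < β * b)
  have hne' : β * b ≠ (0:ℝ) := ne_of_gt (by positivity)
  have hcc := tanh_strictConcave.2 hmemb hmem0 hne' hl0
    (by linarith : (0:ℝ) < 1 - lam) (by ring)
  simp only [smul_eq_mul, Real.tanh_zero, mul_zero, add_zero] at hcc
  have harg : lam * (β * b) = β * a := by rw [hlam]; field_simp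
  rw [harg, hfa, hfb] at hcc
  have heq : lam * b = a := by rw [hlam]; field_simp
  linarith

/-- For `β > 1` there is a unique `t₀ > 0` with `tanh (β t₀) = t₀`; moreover, with
`F_β(t) = t²/(2β) − ln cosh t`, the point `s₀ = β t₀` is the unique positive critical
point of `F_β` and `F_β''(s₀) > 0`. -/
theorem cw_fixed_point (β : ℝ) (hβ : 1 < β) :
    (∃! t₀ : ℝ, 0 < t₀ ∧ Real.tanh (β * t₀) = t₀) ∧
    ∀ t₀ : ℝ, 0 < t₀ → Real.tanh (β * t₀) = t₀ →
      (∀ s : ℝ, 0 < s →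
          (deriv (fun t : ℝ => t ^ 2 / (2 * β) - Real.log (Real.cosh t)) s = 0 ↔ s = β * t₀)) ∧
      0 < iteratedDeriv 2 (fun t : ℝ => t ^ 2 / (2 * β) - Real.log (Real.cosh t)) (β * t₀) := by
  have hβ0 : 0 < β := by linarith
  -- existence of a fixed point
  have hex : ∃ t₀ : ℝ, 0 < t₀ ∧ Real.tanh (β * t₀) = t₀ := by
    set ε : ℝ := (β - 1) / (2 * β) with hε
    have hε0 : 0 < ε := by
      rw [hε]; apply div_pos <;> linarith
    have hε1 : ε < 1 := by
      rw [hε, div_lt_one (by positivity)]; linarith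
    set g : ℝ → ℝ := fun t => Real.tanh (β * t) - t with hg
    have hgc : Continuous g := by
      have ht : Continuous Real.tanh :=
        continuous_iff_continuousAt.2 fun x => (hasDerivAt_tanh' x).continuousAt
      exact (ht.comp (continuous_const.mul continuous_id)).sub continuous_id
    have hβε : β * ε = (β - 1) / 2 := by
      rw [hε]; field_simp
    have hgε : 0 < g ε := by
      have h1 : β * ε / (1 + β * ε) < Real.tanh (β * ε) :=
        tanh_gt _ (by positivity)
      have hεβ : ε * (2 * β) = β - 1 := by
        rw [hε]; field_simp
      have h2 : ε < β * ε / (1 + β * ε) := by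
        rw [lt_div_iff₀ (by nlinarith)]
        nlinarith [hεβ, hβε, mul_pos hβ0 hε0, sq_nonneg (β - 1)]
      simp only [hg]
      linarith
    have hg1 : g 1 < 0 := by
      simp only [hg]
      have := tanh_lt_one' (β * 1)
      linarith
    have h0mem : (0:ℝ) ∈ Set.Icc (g 1) (g ε) := ⟨hg1.le, hgε.le⟩
    obtain ⟨t₀, ht₀mem, ht₀⟩ :=
      intermediate_value_Icc' hε1.le hgc.continuousOn h0mem
    refine ⟨t₀, lt_of_lt_of_le hε0 ht₀mem.1, ?_⟩
    have : Real.tanh (β * t₀) - t₀ = 0 := ht₀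
    linarith
  obtain ⟨t₁, ht₁pos, ht₁fix⟩ := hex
  constructor
  · exact ⟨t₁, ⟨ht₁pos, ht₁fix⟩, fun y hy => fixed_unique β hβ hy.1 ht₁pos hy.2 ht₁fix⟩
  intro t₀ ht₀ hfix
  set F : ℝ → ℝ := fun t => t ^ 2 / (2 * β) - Real.log (Real.cosh t) with hF
  have hF' : ∀ s : ℝ, HasDerivAt F (s / β - Real.tanh s) s := by
    intro s
    have h1 : HasDerivAt (fun t : ℝ => t ^ 2 / (2 * β)) (s / β) s := by
      have := (hasDerivAt_pow 2 s).div_const (2 * β)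
      refine this.congr_deriv ?_
      field_simp
      ring
    have h2 : HasDerivAt (fun t : ℝ => Real.log (Real.cosh t)) (Real.tanh s) s := by
      have := (Real.hasDerivAt_cosh s).log (Real.cosh_pos s).ne'
      rwa [← Real.tanh_eq_sinh_div_cosh] at this
    exact h1.sub h2
  have hderiv : deriv F = fun s => s / β - Real.tanh s :=
    funext fun s => (hF' s).deriv
  constructor
  · intro s hs
    rw [hderiv]
    constructor
    · intro h
      have htanh : Real.tanh s = s / β := by linarith
      have hu : 0 < s / β := by positivity
      have harg : β * (s / β) = s := by field_simp
      have hfixu : Real.tanh (β * (s / β)) = s / β := by rw [harg, htanh]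
      have := fixed_unique β hβ hu ht₀ hfixu hfix
      rw [← this]
      field_simp
    · intro h
      subst h
      show β * t₀ / β - Real.tanh (β * t₀) = 0
      have h1 : β * t₀ / β = t₀ := by field_simp
      rw [h1, hfix]
      ring
  · rw [iteratedDeriv_succ, iteratedDeriv_one, hderiv]
    set s₀ := β * t₀ with hs₀
    have hs₀pos : 0 < s₀ := by positivity
    have hdd : HasDerivAt (fun s : ℝ => s / β - Real.tanh s)
        (1 / β - 1 / Real.cosh s₀ ^ 2) s₀ :=
      ((hasDerivAt_id s₀).div_const β).sub (hasDerivAt_tanh' s₀)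
    rw [hdd.deriv]
    -- show cosh s₀ ^ 2 > β
    have htanh : Real.tanh s₀ = s₀ / β := by
      rw [hs₀, hfix]; field_simp
    have hsinh : 0 < Real.sinh s₀ := Real.sinh_pos_iff.2 hs₀pos
    have hcosh : 0 < Real.cosh s₀ := Real.cosh_pos s₀
    have h2s : 2 * s₀ < Real.sinh (2 * s₀) :=
      Real.self_lt_sinh_iff.2 (by linarith)
    rw [Real.sinh_two_mul] at h2s
    have hkey : β < Real.cosh s₀ ^ 2 := by
      have hts : Real.tanh s₀ = Real.sinh s₀ / Real.cosh s₀ :=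
        Real.tanh_eq_sinh_div_cosh s₀
      have hβs : β * Real.sinh s₀ = s₀ * Real.cosh s₀ := by
        have := htanh
        rw [hts] at this
        field_simp at this
        linarith
      have h3 : s₀ * Real.cosh s₀ < Real.sinh s₀ * Real.cosh s₀ * Real.cosh s₀ :=
        mul_lt_mul_of_pos_right (by linarith) hcosh
      have h4 : Real.sinh s₀ * β < Real.sinh s₀ * Real.cosh s₀ ^ 2 := by nlinarith
      exact lt_of_mul_lt_mul_left h4 hsinh.le
    have : 1 / Real.cosh s₀ ^ 2 < 1 / β :=
      one_div_lt_one_div_of_lt hβ0 hkey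
    linarith
end

section
/- Hubbard–Stratonovich representation of Curie–Weiss correlations: let β > 0, N ≥ 1, and let X_1,…,X_N be CW(β,N)-distributed. Then for every ℓ ≤ N, E_{β,N}(X_1·X_2·…·X_ℓ) = Z_N(ℓ)/Z_N(0), where Z_N(ℓ) := ∫_{−∞}^{∞} e^{−N F_β(t)} tanh^ℓ(t) dt and F_β(t) := t²/(2β) − ln cosh(t). -/
open MeasureTheory Filter Real Topology ENNReal

/-! ### Auxiliary lemmas -/

lemma gauss_decomp (a b : ℝ) (ha : 0 < a) :
    (fun t : ℝ => Real.exp (-a * t ^ 2 + b * t))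
      = fun t => Real.exp (-a * (t - b / (2 * a)) ^ 2) * Real.exp (b ^ 2 / (4 * a)) := by
  funext t
  rw [← Real.exp_add]
  congr 1
  field_simp
  ring

lemma gauss_integrable {a : ℝ} (ha : 0 < a) (b : ℝ) :
    Integrable (fun t : ℝ => Real.exp (-a * t ^ 2 + b * t)) := by
  rw [gauss_decomp a b ha]
  exact ((integrable_exp_neg_mul_sq ha).comp_sub_right _).mul_const _

lemma gauss_eval {a : ℝ} (ha : 0 < a) (b : ℝ) :
    ∫ t : ℝ, Real.exp (-a * t ^ 2 + b * t)
      = Real.sqrt (π / a) * Real.exp (b ^ 2 / (4 * a)) := by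
  rw [gauss_decomp a b ha, integral_mul_const,
    integral_sub_right_eq_self (fun t => Real.exp (-a * t ^ 2)) (b / (2 * a)),
    integral_gaussian]

lemma weight_eq {β : ℝ} (hβ : 0 < β) {N : ℕ} (hN : 1 ≤ N) (σ : Fin N → Bool) :
    cwWeight β N σ = Real.sqrt (((N : ℝ) / (2 * β)) / π) *
      ∫ t : ℝ, Real.exp (-((N : ℝ) / (2 * β)) * t ^ 2 + (∑ i, spin (σ i)) * t) := by
  have hN0 : (0 : ℝ) < N := by exact_mod_cast hN
  set a : ℝ := (N : ℝ) / (2 * β) with ha_def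
  have ha : 0 < a := by positivity
  rw [gauss_eval ha]
  have h1 : (∑ i, spin (σ i)) ^ 2 / (4 * a) = β / (2 * N) * (∑ i, spin (σ i)) ^ 2 := by
    rw [ha_def]; field_simp; ring
  have h2 : Real.sqrt (a / π) * Real.sqrt (π / a) = 1 := by
    rw [← Real.sqrt_mul (by positivity)]
    rw [div_mul_div_comm, mul_comm, div_self (by positivity), Real.sqrt_one]
  rw [cwWeight, ← h1, ← mul_assoc, h2, one_mul]

lemma card_filter_lt {N ℓ : ℕ} (hℓ : ℓ ≤ N) :
    (Finset.univ.filter (fun j : Fin N => (j : ℕ) < ℓ)).card = ℓ := by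
  rw [Finset.card_filter, Fin.sum_univ_eq_sum_range (fun j => if j < ℓ then 1 else 0),
    ← Finset.card_filter]
  have : (Finset.range N).filter (fun j => j < ℓ) = Finset.range ℓ := by
    ext j; simp only [Finset.mem_filter, Finset.mem_range]; omega
  rw [this, Finset.card_range]

lemma pointwise_sum {β : ℝ} (hβ : 0 < β) {N : ℕ} (hN : 1 ≤ N) {ℓ : ℕ} (hℓ : ℓ ≤ N) (t : ℝ) :
    ∑ σ : Fin N → Bool,
        Real.exp (-((N : ℝ) / (2 * β)) * t ^ 2 + (∑ i, spin (σ i)) * t) *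
          ∏ j ∈ Finset.univ.filter (fun j : Fin N => (j : ℕ) < ℓ), spin (σ j)
      = 2 ^ N *
        (Real.exp (-(N : ℝ) * (t ^ 2 / (2 * β) - Real.log (Real.cosh t))) *
          Real.tanh t ^ ℓ) := by
  have hN0 : (0 : ℝ) < N := by exact_mod_cast hN
  set a : ℝ := (N : ℝ) / (2 * β) with ha_def
  have hstep : ∀ σ : Fin N → Bool,
      Real.exp (-a * t ^ 2 + (∑ i, spin (σ i)) * t) *
          ∏ j ∈ Finset.univ.filter (fun j : Fin N => (j : ℕ) < ℓ), spin (σ j)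
        = Real.exp (-a * t ^ 2) *
          ∏ i : Fin N, (Real.exp (spin (σ i) * t) * (if (i : ℕ) < ℓ then spin (σ i) else 1)) := by
    intro σ
    rw [Finset.prod_mul_distrib, Real.exp_add, Finset.sum_mul, Real.exp_sum,
      Finset.prod_filter, mul_assoc]
  simp only [hstep]
  rw [← Finset.mul_sum]
  have hps := Fintype.prod_sum (f := fun (i : Fin N) (b : Bool) =>
    Real.exp (spin b * t) * (if (i : ℕ) < ℓ then spin b else 1))
  rw [← hps]
  have hterm : ∀ i : Fin N,
      (∑ b : Bool, Real.exp (spin b * t) * (if (i : ℕ) < ℓ then spin b else 1))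
        = if (i : ℕ) < ℓ then 2 * Real.sinh t else 2 * Real.cosh t := by
    intro i
    rw [Fintype.sum_bool]
    simp only [show spin true = 1 from rfl, show spin false = (-1 : ℝ) from rfl]
    by_cases h : (i : ℕ) < ℓ
    · simp only [h, if_true]; rw [Real.sinh_eq]; ring
    · simp only [h, if_false]; rw [Real.cosh_eq]; ring
  simp only [hterm]
  rw [Finset.prod_ite, Finset.prod_const, Finset.prod_const, card_filter_lt hℓ]
  have hcard : (Finset.univ.filter (fun i : Fin N => ¬ (i : ℕ) < ℓ)).card = N - ℓ := by
    have h := Finset.card_filter_add_card_filter_not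
      (s := (Finset.univ : Finset (Fin N))) (p := fun i : Fin N => (i : ℕ) < ℓ)
    rw [card_filter_lt hℓ, Finset.card_univ, Fintype.card_fin] at h
    omega
  rw [hcard]
  have hF : Real.exp (-(N : ℝ) * (t ^ 2 / (2 * β) - Real.log (Real.cosh t)))
      = Real.exp (-a * t ^ 2) * Real.cosh t ^ N := by
    have : -(N : ℝ) * (t ^ 2 / (2 * β) - Real.log (Real.cosh t))
        = -a * t ^ 2 + (N : ℝ) * Real.log (Real.cosh t) := by
      rw [ha_def]; ring
    rw [this, Real.exp_add, Real.exp_nat_mul, Real.exp_log (Real.cosh_pos t)]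
  rw [hF]
  have hsinh : Real.sinh t = Real.tanh t * Real.cosh t := by
    rw [Real.tanh_eq_sinh_div_cosh, div_mul_cancel₀ _ (Real.cosh_pos t).ne']
  rw [hsinh]
  have hpow : ∀ x : ℝ, x ^ ℓ * x ^ (N - ℓ) = x ^ N := by
    intro x; rw [← pow_add, Nat.add_sub_cancel' hℓ]
  calc Real.exp (-a * t ^ 2) *
        ((2 * (Real.tanh t * Real.cosh t)) ^ ℓ * (2 * Real.cosh t) ^ (N - ℓ))
      = ((2 : ℝ) ^ ℓ * 2 ^ (N - ℓ)) *
        (Real.exp (-a * t ^ 2) * (Real.cosh t ^ ℓ * Real.cosh t ^ (N - ℓ)) *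
          Real.tanh t ^ ℓ) := by ring
    _ = 2 ^ N * (Real.exp (-a * t ^ 2) * Real.cosh t ^ N * Real.tanh t ^ ℓ) := by
        rw [hpow, hpow]

lemma sum_eq {β : ℝ} (hβ : 0 < β) {N : ℕ} (hN : 1 ≤ N) {ℓ : ℕ} (hℓ : ℓ ≤ N) :
    ∑ σ : Fin N → Bool, cwWeight β N σ *
        ∏ j ∈ Finset.univ.filter (fun j : Fin N => (j : ℕ) < ℓ), spin (σ j)
      = (Real.sqrt (((N : ℝ) / (2 * β)) / π) * 2 ^ N) *
        ∫ t : ℝ, Real.exp (-(N : ℝ) * (t ^ 2 / (2 * β) - Real.log (Real.cosh t))) *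
          Real.tanh t ^ ℓ := by
  have hN0 : (0 : ℝ) < N := by exact_mod_cast hN
  have ha : 0 < (N : ℝ) / (2 * β) := by positivity
  calc ∑ σ : Fin N → Bool, cwWeight β N σ *
          ∏ j ∈ Finset.univ.filter (fun j : Fin N => (j : ℕ) < ℓ), spin (σ j)
      = Real.sqrt (((N : ℝ) / (2 * β)) / π) *
        ∑ σ : Fin N → Bool, ∫ t : ℝ,
          Real.exp (-((N : ℝ) / (2 * β)) * t ^ 2 + (∑ i, spin (σ i)) * t) *
            ∏ j ∈ Finset.univ.filter (fun j : Fin N => (j : ℕ) < ℓ), spin (σ j) := by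
        rw [Finset.mul_sum]
        refine Finset.sum_congr rfl fun σ _ => ?_
        rw [weight_eq hβ hN σ, mul_assoc, MeasureTheory.integral_mul_const]
    _ = Real.sqrt (((N : ℝ) / (2 * β)) / π) *
        ∫ t : ℝ, ∑ σ : Fin N → Bool,
          Real.exp (-((N : ℝ) / (2 * β)) * t ^ 2 + (∑ i, spin (σ i)) * t) *
            ∏ j ∈ Finset.univ.filter (fun j : Fin N => (j : ℕ) < ℓ), spin (σ j) := by
        rw [MeasureTheory.integral_finset_sum]
        intro σ _
        exact (gauss_integrable ha _).mul_const _
    _ = (Real.sqrt (((N : ℝ) / (2 * β)) / π) * 2 ^ N) *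
        ∫ t : ℝ, Real.exp (-(N : ℝ) * (t ^ 2 / (2 * β) - Real.log (Real.cosh t))) *
          Real.tanh t ^ ℓ := by
        rw [mul_assoc]
        congr 1
        rw [← MeasureTheory.integral_const_mul]
        exact MeasureTheory.integral_congr_ae
          (Filter.Eventually.of_forall fun t => pointwise_sum hβ hN hℓ t)

/-- Hubbard–Stratonovich representation of Curie–Weiss correlations:
`E_{β,N}(X_1 ⋯ X_ℓ) = Z_N(ℓ) / Z_N(0)` with
`Z_N(ℓ) = ∫ e^{-N F_β(t)} tanh(t)^ℓ dt` and `F_β(t) = t²/(2β) − ln cosh t`. -/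
theorem cw_hubbard_stratonovich (β : ℝ) (hβ : 0 < β) (N : ℕ) (hN : 1 ≤ N)
    (ℓ : ℕ) (hℓ : ℓ ≤ N) :
    cwCorr β N ℓ =
      (∫ t : ℝ, Real.exp (-(N : ℝ) * (t ^ 2 / (2 * β) - Real.log (Real.cosh t))) *
          Real.tanh t ^ ℓ) /
      (∫ t : ℝ, Real.exp (-(N : ℝ) * (t ^ 2 / (2 * β) - Real.log (Real.cosh t)))) := by
  have hN0 : (0 : ℝ) < N := by exact_mod_cast hN
  have hden : cwZ β N = (Real.sqrt (((N : ℝ) / (2 * β)) / π) * 2 ^ N) *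
      ∫ t : ℝ, Real.exp (-(N : ℝ) * (t ^ 2 / (2 * β) - Real.log (Real.cosh t))) := by
    have h0 := sum_eq hβ hN (ℓ := 0) (Nat.zero_le N)
    simpa [cwZ, Nat.not_lt_zero] using h0
  have hk : Real.sqrt (((N : ℝ) / (2 * β)) / π) * 2 ^ N ≠ 0 := by
    have : (0 : ℝ) < ((N : ℝ) / (2 * β)) / π := by positivity
    positivity
  rw [cwCorr, cwExp, sum_eq hβ hN hℓ, hden, mul_div_mul_left _ _ hk]
end

section
/- Counting bound for multi-indices: for all K, N ∈ ℕ and 0 ≤ r ≤ K, the number w_{K,N}(r) of multi-indices (i_1,…,i_K) ∈ {1,…,N}^K in which exactly r distinct index values occur exactly once satisfies w_{K,N}(r) ≤ K! · N^{(K+r)/2}. -/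
/-!
A multi-index taking `m` distinct values, `r` of them exactly once, has length
`K ≥ r + 2 (m - r)`, i.e. `2 m ≤ K + r`. All such multi-indices take values in some
`m`-element set `T`, so there are at most `C(N, m) m^K` of them, and
`C(N, m) m^K ≤ K! N^m` because `m^K ≤ K! m!` for `m ≤ K`.
-/

/-- Number of occurrences of the index value `j` in the multi-index `i`. -/
def occCount {K N : ℕ} (i : Fin K → Fin N) (j : Fin N) : ℕ :=
  (Finset.univ.filter fun ν : Fin K => i ν = j).card

/-- Number of distinct index values occurring exactly once in the multi-index `i`. -/
def singleCount {K N : ℕ} (i : Fin K → Fin N) : ℕ :=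
  (Finset.univ.filter fun j : Fin N => occCount i j = 1).card

open Finset

namespace Nat

/-- Pair the factors of `m! * m!` as `(k + 1) (m - k)`, each of which is at least `m`. -/
theorem pow_self_le_factorial_mul_factorial (m : ℕ) : m ^ m ≤ m ! * m ! := by
  calc m ^ m = ∏ _k ∈ range m, m := by rw [prod_const, card_range]
    _ ≤ ∏ k ∈ range m, (k + 1) * (m - k) := by
      refine prod_le_prod' fun k hk => ?_
      obtain ⟨d, rfl⟩ : ∃ d, m = k + 1 + d := ⟨m - (k + 1), by grind⟩
      rw [show k + 1 + d - k = d + 1 by omega]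
      nlinarith
    _ = m ! * m ! := by
      rw [prod_mul_distrib, ← factorial_eq_prod_range_add_one, ← descFactorial_eq_prod_range,
        descFactorial_self]

theorem pow_le_factorial_mul_factorial {m K : ℕ} (h : m ≤ K) : m ^ K ≤ K ! * m ! := by
  calc m ^ K = m ^ m * m ^ (K - m) := by rw [← pow_add, Nat.add_sub_cancel' h]
    _ ≤ m ! * m ! * m ^ (K - m) := Nat.mul_le_mul_right _ (pow_self_le_factorial_mul_factorial m)
    _ = m ! * m ^ (K - m) * m ! := by ring
    _ ≤ K ! * m ! := Nat.mul_le_mul_right _ (factorial_mul_pow_sub_le_factorial h)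

theorem choose_mul_pow_le_factorial_mul_pow {m K : ℕ} (N : ℕ) (h : m ≤ K) :
    N.choose m * m ^ K ≤ K ! * N ^ m := by
  calc N.choose m * m ^ K ≤ N.choose m * (K ! * m !) :=
        Nat.mul_le_mul_left _ (pow_le_factorial_mul_factorial h)
    _ = K ! * N.descFactorial m := by rw [descFactorial_eq_factorial_mul_choose]; ring
    _ ≤ K ! * N ^ m := Nat.mul_le_mul_left _ (descFactorial_le_pow N m)

end Nat

open Nat

theorem card_filter_card_image_le {ι α : Type*} [Fintype ι] [Fintype α] [DecidableEq ι]
    [DecidableEq α] {m : ℕ} (hm : m ≤ Fintype.card α) :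
    #{f : ι → α | #(univ.image f) ≤ m} ≤ (Fintype.card α).choose m * m ^ Fintype.card ι := by
  have hcover : ({f : ι → α | #(univ.image f) ≤ m} : Finset (ι → α))
      ⊆ (powersetCard m univ).biUnion fun T => Fintype.piFinset fun _ : ι => T := by
    intro f hf
    obtain ⟨T, hfT, hT⟩ := exists_superset_card_eq (mem_filter.mp hf).2 (by simpa using hm)
    exact mem_biUnion.mpr ⟨T, mem_powersetCard.mpr ⟨subset_univ T, hT⟩,
      Fintype.mem_piFinset.mpr fun x => hfT (mem_image_of_mem f (mem_univ x))⟩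
  calc #{f : ι → α | #(univ.image f) ≤ m}
      ≤ ∑ T ∈ powersetCard m univ, #(Fintype.piFinset fun _ : ι => T) :=
        (card_le_card hcover).trans card_biUnion_le
    _ = ∑ T ∈ powersetCard m (univ : Finset α), m ^ Fintype.card ι :=
        sum_congr rfl fun T hT => by
          rw [Fintype.card_piFinset, prod_const, (mem_powersetCard.mp hT).2, Finset.card_univ]
    _ = (Fintype.card α).choose m * m ^ Fintype.card ι := by
        rw [sum_const, card_powersetCard, Finset.card_univ, smul_eq_mul]

theorem sum_occCount_image {K N : ℕ} (i : Fin K → Fin N) :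
    ∑ j ∈ univ.image i, occCount i j = K := by
  unfold occCount
  rw [← card_eq_sum_card_fiberwise fun ν _ => mem_image_of_mem i (mem_univ ν), Finset.card_univ,
    Fintype.card_fin]

theorem one_le_occCount_of_mem_image {K N : ℕ} {i : Fin K → Fin N} {j : Fin N}
    (hj : j ∈ univ.image i) : 1 ≤ occCount i j := by
  obtain ⟨ν, -, rfl⟩ := mem_image.mp hj
  exact card_pos.mpr ⟨ν, by simp⟩

/-- Every value that is not a singleton occurs at least twice. -/
theorem two_mul_card_image_le {K N : ℕ} (i : Fin K → Fin N) :
    2 * #(univ.image i) ≤ K + singleCount i := by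
  calc 2 * #(univ.image i) = ∑ _j ∈ univ.image i, 2 := by rw [sum_const, smul_eq_mul, mul_comm]
    _ ≤ ∑ j ∈ univ.image i, (occCount i j + if occCount i j = 1 then 1 else 0) :=
        sum_le_sum fun j hj => by
          have := one_le_occCount_of_mem_image hj
          split_ifs <;> omega
    _ = K + #{j ∈ univ.image i | occCount i j = 1} := by
        rw [sum_add_distrib, sum_occCount_image, card_filter]
    _ ≤ K + singleCount i :=
        Nat.add_le_add_left (card_le_card (filter_subset_filter _ (subset_univ _))) K

theorem card_filter_singleCount_eq_le {K N r : ℕ} (hr : r ≤ K) :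
    #{i : Fin K → Fin N | singleCount i = r} ≤ K ! * N ^ min ((K + r) / 2) N := by
  set m := min ((K + r) / 2) N
  have hmK : m ≤ K := (min_le_left _ _).trans (by omega)
  have hsub : ({i | singleCount i = r} : Finset (Fin K → Fin N))
      ⊆ ({i | #(univ.image i) ≤ m} : Finset (Fin K → Fin N)) := by
    intro i hi
    rw [mem_filter] at hi ⊢
    have hKr := two_mul_card_image_le i
    have hN : #(univ.image i) ≤ N := card_le_univ _ |>.trans_eq (Fintype.card_fin N)
    exact ⟨mem_univ i, le_min (by omega) hN⟩
  calc #{i : Fin K → Fin N | singleCount i = r} ≤ #{i : Fin K → Fin N | #(univ.image i) ≤ m} :=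
        card_le_card hsub
    _ ≤ N.choose m * m ^ K := by
        simpa using card_filter_card_image_le (ι := Fin K) (α := Fin N) (m := m) (by simp [m])
    _ ≤ K ! * N ^ m := choose_mul_pow_le_factorial_mul_pow N hmK

/-- Counting bound: the number `w_{K,N}(r)` of multi-indices in `{1,…,N}^K` in which
exactly `r` distinct index values occur exactly once satisfies
`w_{K,N}(r) ≤ K! · N^{(K+r)/2}`. -/
theorem multiindex_count_bound (K N r : ℕ) (hr : r ≤ K) :
    ((Finset.univ.filter fun i : Fin K → Fin N => singleCount i = r).card : ℝ)
      ≤ (K.factorial : ℝ) * (N : ℝ) ^ (((K : ℝ) + r) / 2) := by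
  -- `(0 : ℝ) ^ x` is not monotone in `x`, so `N = 0` is treated apart.
  rcases N.eq_zero_or_pos with rfl | hN
  · rcases K.eq_zero_or_pos with rfl | hK
    · obtain rfl : r = 0 := by omega
      simp only [factorial_zero, CharP.cast_eq_zero, add_zero, zero_div, Real.rpow_zero, mul_one]
      exact_mod_cast (card_filter_le _ _).trans (by simp)
    · have : IsEmpty (Fin K → Fin 0) := ⟨fun f => (f ⟨0, hK⟩).elim0⟩
      simp only [univ_eq_empty, filter_empty, card_empty, CharP.cast_eq_zero]
      positivity
  · calc ((Finset.univ.filter fun i : Fin K → Fin N => singleCount i = r).card : ℝ)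
        ≤ K ! * (N : ℝ) ^ min ((K + r) / 2) N := by
          exact_mod_cast card_filter_singleCount_eq_le hr
      _ ≤ K ! * (N : ℝ) ^ (((K : ℝ) + r) / 2) := by
          rw [← Real.rpow_natCast]
          gcongr
          · exact_mod_cast hN
          · rw [le_div_iff₀ two_pos]; exact_mod_cast (by omega : min ((K + r) / 2) N * 2 ≤ K + r)
end

section
/- Counting bound for multi-indices containing a triple: for all K, N ∈ ℕ and 0 ≤ r ≤ K, the number w⁺_{K,N}(r) of multi-indices (i_1,…,i_K) ∈ {1,…,N}^K in which exactly r distinct index values occur exactly once and at least one index value occurs three or more times satisfies w⁺_{K,N}(r) ≤ K! · N^{(K+r)/2 − 1/2}. -/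
namespace MIAux

variable {K N m : ℕ}

/-- The first (smallest) index with the same value as at `ν`. -/
def firstIdx (i : Fin K → Fin N) (ν : Fin K) : Fin K :=
  (Finset.univ.filter fun μ => i μ = i ν).min' ⟨ν, by simp⟩

lemma firstIdx_le (i : Fin K → Fin N) (ν : Fin K) : firstIdx i ν ≤ ν :=
  Finset.min'_le _ _ (by simp)

lemma apply_firstIdx (i : Fin K → Fin N) (ν : Fin K) : i (firstIdx i ν) = i ν := by
  have h : firstIdx i ν ∈ Finset.univ.filter fun μ => i μ = i ν :=
    Finset.min'_mem _ ⟨ν, by simp⟩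
  exact (Finset.mem_filter.mp h).2

lemma firstIdx_congr (i : Fin K → Fin N) {ν ν' : Fin K} (h : i ν' = i ν) :
    firstIdx i ν' = firstIdx i ν := by
  have h1 : firstIdx i ν ∈ Finset.univ.filter fun μ => i μ = i ν' := by
    simp [apply_firstIdx, h]
  have h2 : firstIdx i ν' ∈ Finset.univ.filter fun μ => i μ = i ν := by
    simp [apply_firstIdx, h]
  exact le_antisymm (Finset.min'_le _ _ h1) (Finset.min'_le _ _ h2)

lemma firstIdx_idem (i : Fin K → Fin N) (ν : Fin K) :
    firstIdx i (firstIdx i ν) = firstIdx i ν :=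
  firstIdx_congr i (apply_firstIdx i ν)

/-- Fixed points of a pattern map: for `f = firstIdx i` these are the first occurrences. -/
def FOf (f : Fin K → Fin K) : Finset (Fin K) :=
  Finset.univ.filter fun ν => f ν = ν

lemma mem_FOf_firstIdx (i : Fin K → Fin N) (ν : Fin K) :
    firstIdx i ν ∈ FOf (firstIdx i) := by
  simp [FOf, firstIdx_idem]

lemma card_FOf_firstIdx (i : Fin K → Fin N) :
    (FOf (firstIdx i)).card = (Finset.image i Finset.univ).card := by
  apply Finset.card_bij (fun ν _ => i ν)
  · intro ν hν; exact Finset.mem_image_of_mem i (Finset.mem_univ ν)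
  · intro ν₁ h₁ ν₂ h₂ h
    have e₁ : firstIdx i ν₁ = ν₁ := (Finset.mem_filter.mp h₁).2
    have e₂ : firstIdx i ν₂ = ν₂ := (Finset.mem_filter.mp h₂).2
    rw [← e₁, ← e₂]
    exact firstIdx_congr i h
  · intro j hj
    obtain ⟨ν, -, rfl⟩ := Finset.mem_image.mp hj
    exact ⟨firstIdx i ν, mem_FOf_firstIdx i ν, apply_firstIdx i ν⟩

/-- Rank of the first occurrence of the value at `ν` among all first occurrences. -/
def rk (f : Fin K → Fin K) (ν : Fin K) : ℕ :=
  if h : f ν ∈ FOf f then (((FOf f).orderIsoOfFin rfl).symm ⟨f ν, h⟩ : Fin (FOf f).card).1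
  else 0

lemma rk_lt (i : Fin K → Fin N) (ν : Fin K) :
    rk (firstIdx i) ν < (FOf (firstIdx i)).card := by
  rw [rk, dif_pos (mem_FOf_firstIdx i ν)]
  exact Fin.is_lt _

/-- The values of `i` at first occurrences, listed in increasing order of position. -/
def gfun (hN : 0 < N) (i : Fin K → Fin N) : Fin m → Fin N := fun k =>
  if h : (k : ℕ) < (FOf (firstIdx i)).card
  then i (((FOf (firstIdx i)).orderIsoOfFin rfl ⟨(k : ℕ), h⟩ : {x // x ∈ FOf (firstIdx i)}) : Fin K)
  else ⟨0, hN⟩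

lemma gfun_recon (hN : 0 < N) (i : Fin K → Fin N) (ν : Fin K)
    (hm : (FOf (firstIdx i)).card ≤ m) :
    gfun (m := m) hN i ⟨rk (firstIdx i) ν, lt_of_lt_of_le (rk_lt i ν) hm⟩ = i ν := by
  have hmem := mem_FOf_firstIdx i ν
  rw [gfun]
  rw [dif_pos (show (rk (firstIdx i) ν) < (FOf (firstIdx i)).card from rk_lt i ν)]
  have h1 : (⟨rk (firstIdx i) ν, rk_lt i ν⟩ : Fin (FOf (firstIdx i)).card)
      = ((FOf (firstIdx i)).orderIsoOfFin rfl).symm ⟨firstIdx i ν, hmem⟩ := by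
    apply Fin.ext
    simp [rk, dif_pos hmem]
  rw [show (⟨rk (firstIdx i) ν, _⟩ : Fin (FOf (firstIdx i)).card)
      = ((FOf (firstIdx i)).orderIsoOfFin rfl).symm ⟨firstIdx i ν, hmem⟩ from h1]
  rw [OrderIso.apply_symm_apply]
  exact apply_firstIdx i ν

/-- The key counting estimate: if exactly `r` values occur once and some value occurs at
least three times, then `2·(#distinct values) + 1 ≤ K + r`. -/
lemma key_bound {r : ℕ} {i : Fin K → Fin N} (h1 : singleCount i = r)
    (h2 : ∃ j, 3 ≤ occCount i j) :
    2 * (FOf (firstIdx i)).card + 1 ≤ K + r := by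
  classical
  obtain ⟨j₀, hj₀⟩ := h2
  set U := Finset.univ.filter fun j : Fin N => 0 < occCount i j with hU
  set S1 := Finset.univ.filter fun j : Fin N => occCount i j = 1 with hS1
  have hS1card : S1.card = r := h1
  have hsub : S1 ⊆ U := by
    intro j hj
    simp only [hU, hS1, Finset.mem_filter, Finset.mem_univ, true_and] at *
    omega
  have hcard_img : (FOf (firstIdx i)).card = U.card := by
    rw [card_FOf_firstIdx]
    congr 1
    ext j
    simp [hU, occCount, Finset.card_pos, Finset.filter_nonempty_iff]
  have hsum : ∑ j, occCount i j = K := by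
    have h := Finset.card_eq_sum_card_fiberwise
      (f := i) (s := Finset.univ) (t := Finset.univ) (fun x _ => Finset.mem_univ (i x))
    simpa [occCount] using h.symm
  have hUsum : ∑ j ∈ U, occCount i j ≤ K := by
    calc ∑ j ∈ U, occCount i j ≤ ∑ j, occCount i j :=
          Finset.sum_le_sum_of_subset (Finset.subset_univ U)
      _ = K := hsum
  have hsplit : ∑ j ∈ U \ S1, occCount i j + ∑ j ∈ S1, occCount i j
      = ∑ j ∈ U, occCount i j := Finset.sum_sdiff hsub
  have hS1sum : ∑ j ∈ S1, occCount i j = r := by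
    have hone : ∀ j ∈ S1, occCount i j = 1 := fun j hj => (Finset.mem_filter.mp hj).2
    rw [Finset.sum_congr rfl hone, Finset.sum_const, smul_eq_mul, mul_one]
    exact hS1card
  have hj₀D : j₀ ∈ U \ S1 := by
    simp only [Finset.mem_sdiff, hU, hS1, Finset.mem_filter, Finset.mem_univ, true_and]
    omega
  have hD2 : ∀ j ∈ (U \ S1).erase j₀, 2 ≤ occCount i j := by
    intro j hj
    have hj' := Finset.mem_of_mem_erase hj
    simp only [Finset.mem_sdiff, hU, hS1, Finset.mem_filter, Finset.mem_univ, true_and] at hj'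
    omega
  have hDsum : occCount i j₀ + ∑ j ∈ (U \ S1).erase j₀, occCount i j
      = ∑ j ∈ U \ S1, occCount i j := Finset.add_sum_erase _ _ hj₀D
  have herasesum : ((U \ S1).erase j₀).card * 2 ≤ ∑ j ∈ (U \ S1).erase j₀, occCount i j := by
    have := Finset.card_nsmul_le_sum ((U \ S1).erase j₀) (occCount i) 2 hD2
    simpa [smul_eq_mul] using this
  have hcarderase : ((U \ S1).erase j₀).card = (U \ S1).card - 1 :=
    Finset.card_erase_of_mem hj₀D
  have hDpos : 0 < (U \ S1).card := Finset.card_pos.mpr ⟨j₀, hj₀D⟩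
  have hcards : (U \ S1).card + S1.card = U.card := Finset.card_sdiff_add_card_eq_card hsub
  rw [hcard_img]
  omega

/-- There are `K!` maps `f : Fin K → Fin K` with `f ν ≤ ν` for all `ν`. -/
def leEquiv (K : ℕ) : {f : Fin K → Fin K // ∀ ν, f ν ≤ ν} ≃ ∀ ν : Fin K, Fin (ν + 1) where
  toFun f ν := ⟨(f.1 ν : ℕ), Nat.lt_succ_of_le (Fin.le_def.mp (f.2 ν))⟩
  invFun g := ⟨fun ν => ⟨(g ν : ℕ), lt_of_lt_of_le (g ν).2 ν.2⟩,
    fun ν => Fin.le_def.mpr (Nat.lt_succ_iff.mp (g ν).2)⟩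
  left_inv f := by ext ν; rfl
  right_inv g := by funext ν; apply Fin.ext; rfl

lemma card_Tf (K : ℕ) :
    (Finset.univ.filter fun f : Fin K → Fin K => ∀ ν, f ν ≤ ν).card = K.factorial := by
  rw [← Fintype.card_subtype, Fintype.card_congr (leEquiv K), Fintype.card_pi]
  simp only [Fintype.card_fin]
  rw [Fin.prod_univ_eq_prod_range (fun i => i + 1) K]
  exact Finset.prod_range_add_one_eq_factorial K

lemma card_S_le (K N r m : ℕ) (hN : 0 < N)
    (hm : ∀ i : Fin K → Fin N, singleCount i = r → (∃ j, 3 ≤ occCount i j) →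
      (FOf (firstIdx i)).card ≤ m) :
    (Finset.univ.filter fun i : Fin K → Fin N =>
        singleCount i = r ∧ ∃ j, 3 ≤ occCount i j).card ≤ K.factorial * N ^ m := by
  classical
  have hcard : (Finset.univ.filter fun i : Fin K → Fin N =>
      singleCount i = r ∧ ∃ j, 3 ≤ occCount i j).card ≤
      ((Finset.univ.filter fun f : Fin K → Fin K => ∀ ν, f ν ≤ ν) ×ˢ
        (Finset.univ : Finset (Fin m → Fin N))).card := by
    apply Finset.card_le_card_of_injOn (fun i => (firstIdx i, gfun (m := m) hN i)) ?_ ?_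
    · intro i hi
      simp only [Finset.mem_coe, Finset.mem_product, Finset.mem_filter, Finset.mem_univ, true_and, and_true]
      exact firstIdx_le i
    · intro i₁ h₁ i₂ h₂ heq
      simp only [Finset.coe_filter, Set.mem_setOf_eq, Finset.mem_univ, true_and] at h₁ h₂
      have hf : firstIdx i₁ = firstIdx i₂ := congrArg Prod.fst heq
      have hg : gfun (m := m) hN i₁ = gfun (m := m) hN i₂ := congrArg Prod.snd heq
      have hm₁ : (FOf (firstIdx i₁)).card ≤ m := hm i₁ h₁.1 h₁.2
      have hm₂ : (FOf (firstIdx i₂)).card ≤ m := hm i₂ h₂.1 h₂.2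
      funext ν
      have e₁ := gfun_recon hN i₁ ν hm₁
      have e₂ := gfun_recon hN i₂ ν hm₂
      rw [hg] at e₁
      rw [← e₁, ← e₂]
      congr 1
      apply Fin.ext
      show rk (firstIdx i₁) ν = rk (firstIdx i₂) ν
      rw [hf]
  calc (Finset.univ.filter fun i : Fin K → Fin N =>
      singleCount i = r ∧ ∃ j, 3 ≤ occCount i j).card
      ≤ _ := hcard
    _ = K.factorial * N ^ m := by
      rw [Finset.card_product, card_Tf, Finset.card_univ]
      simp

end MIAux

/-- Counting bound for multi-indices containing a triple: the number `w⁺_{K,N}(r)` of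
multi-indices in `{1,…,N}^K` in which exactly `r` distinct index values occur exactly once
and some index value occurs at least three times satisfies
`w⁺_{K,N}(r) ≤ K! · N^{(K+r)/2 − 1/2}`. -/
theorem multiindex_plus_count_bound (K N r : ℕ) (hr : r ≤ K) :
    ((Finset.univ.filter fun i : Fin K → Fin N =>
        singleCount i = r ∧ ∃ j : Fin N, 3 ≤ occCount i j).card : ℝ)
      ≤ (K.factorial : ℝ) * (N : ℝ) ^ (((K : ℝ) + r) / 2 - 1 / 2) := by
  classical
  set S := Finset.univ.filter fun i : Fin K → Fin N =>
    singleCount i = r ∧ ∃ j : Fin N, 3 ≤ occCount i j with hSdef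
  rcases Finset.eq_empty_or_nonempty S with hS | hS
  · rw [hS]
    simp only [Finset.card_empty, Nat.cast_zero]
    positivity
  · obtain ⟨i₀, hi₀⟩ := hS
    rw [hSdef, Finset.mem_filter] at hi₀
    obtain ⟨-, h1, j₀, hj₀⟩ := hi₀
    have hN : 0 < N := j₀.pos
    have hK3 : 3 ≤ K := by
      have h := Finset.card_filter_le (Finset.univ : Finset (Fin K))
        (fun ν => i₀ ν = j₀)
      have huniv : (Finset.univ : Finset (Fin K)).card = K := by simp
      have : occCount i₀ j₀ ≤ K := by rw [occCount]; omega
      omega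
    set m := (K + r - 1) / 2 with hmdef
    have hkey : ∀ i : Fin K → Fin N, singleCount i = r → (∃ j, 3 ≤ occCount i j) →
        (MIAux.FOf (MIAux.firstIdx i)).card ≤ m := by
      intro i hs ho
      have := MIAux.key_bound hs ho
      omega
    have hb := MIAux.card_S_le K N r m hN hkey
    have h2m : 2 * m + 1 ≤ K + r := by omega
    calc (S.card : ℝ) ≤ ((K.factorial * N ^ m : ℕ) : ℝ) := by exact_mod_cast hb
      _ = (K.factorial : ℝ) * (N : ℝ) ^ (m : ℝ) := by
          push_cast
          rw [Real.rpow_natCast]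
      _ ≤ (K.factorial : ℝ) * (N : ℝ) ^ (((K : ℝ) + r) / 2 - 1 / 2) := by
          apply mul_le_mul_of_nonneg_left _ (by positivity)
          apply Real.rpow_le_rpow_of_exponent_le (by exact_mod_cast hN)
          have hc : ((2 * m + 1 : ℕ) : ℝ) ≤ ((K + r : ℕ) : ℝ) := Nat.cast_le.mpr h2m
          push_cast at hc
          linarith
end

section
/- Moment convergence for the magnetization, supercritical case: fix β > 1 and K ∈ ℕ. For each N let X_1,…,X_N be CW(β,N)-distributed and S_N = ∑_{i=1}^N X_i. Then, as N → ∞, E_{β,N}((S_N/N)^K) converges to m(β)^K if K is even and to 0 if K is odd, where m(β) > 0 is the unique positive solution of x = tanh(βx); these limits are the moments of the measure (1/2)(δ_{−m(β)} + δ_{m(β)}). -/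
open MeasureTheory Filter Real Topology ENNReal

/-!
Grouping configurations by their number `k` of up spins, the Curie–Weiss weight of the
magnetization `s = (2k - n)/n` is `C(n,k) exp (n β s² / 2)`. The binary entropy bounds
`exp (n H(k/n)) / (n + 1) ≤ C(n,k) ≤ exp (n H(k/n))` show that this is `exp (n F(s))` up to a
polynomial factor, where `F(s) = β s² / 2 + H((1 + s)/2)`. Since `F'(s) = β s - artanh s`, the sign
of `F'` on `(0, 1)` is that of `tanh (β s) - s`, so for `β > 1` the maximum of `F` on `[-1, 1]` is
attained exactly at `± m(β)`. Laplace's method therefore concentrates `S_N/N` near `± m(β)`, which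
gives the even moments; the odd moments vanish by the spin-flip symmetry.
-/

open Finset

section Binomial

open Polynomial

lemma eval_bernsteinPolynomial (n j : ℕ) (p : ℝ) :
    (bernsteinPolynomial ℝ n j).eval p = n.choose j * p ^ j * (1 - p) ^ (n - j) := by
  simp [bernsteinPolynomial]

variable {n : ℕ}

lemma eval_bernsteinPolynomial_nonneg (j : ℕ) {p : ℝ} (hp₀ : 0 ≤ p) (hp₁ : p ≤ 1) :
    0 ≤ (bernsteinPolynomial ℝ n j).eval p := by
  rw [eval_bernsteinPolynomial]
  have : 0 ≤ 1 - p := by linarith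
  positivity

lemma sum_eval_bernsteinPolynomial (p : ℝ) :
    ∑ j ∈ range (n + 1), (bernsteinPolynomial ℝ n j).eval p = 1 := by
  simpa [eval_finsetSum] using congrArg (eval p) (bernsteinPolynomial.sum ℝ n)

lemma eval_bernsteinPolynomial_succ_mul (j : ℕ) (p : ℝ) :
    (bernsteinPolynomial ℝ n (j + 1)).eval p * ((j + 1) * (1 - p))
      = (bernsteinPolynomial ℝ n j).eval p * ((n - j : ℕ) * p) := by
  rcases lt_or_ge j n with hj | hj
  · have hchoose : (n.choose (j + 1) : ℝ) * (j + 1) = n.choose j * (n - j : ℕ) := by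
      exact_mod_cast Nat.choose_succ_right_eq n j
    obtain ⟨d, hd⟩ : ∃ d, n - j = d + 1 := ⟨n - j - 1, by omega⟩
    rw [hd] at hchoose
    simp only [eval_bernsteinPolynomial, hd, show n - (j + 1) = d by omega]
    linear_combination p ^ j * p * (1 - p) ^ d * (1 - p) * hchoose
  · simp [eval_bernsteinPolynomial, Nat.choose_eq_zero_of_lt (Nat.lt_succ_of_le hj),
      Nat.sub_eq_zero_of_le hj]

lemma eval_bernsteinPolynomial_le_succ {k j : ℕ} (hk : k ≤ n) (hj : j < k) :
    (bernsteinPolynomial ℝ n j).eval (k / n : ℝ)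
      ≤ (bernsteinPolynomial ℝ n (j + 1)).eval (k / n : ℝ) := by
  have hn : (0 : ℝ) < n := by exact_mod_cast (Nat.zero_le j).trans_lt (hj.trans_le hk)
  have hjk : (j : ℝ) + 1 ≤ k := by exact_mod_cast hj
  have hk' : (k : ℝ) ≤ n := by exact_mod_cast hk
  have hnj : ((n - j : ℕ) : ℝ) = n - j := Nat.cast_sub (hj.trans_le hk).le
  have hB : 0 < ((n - j : ℕ) : ℝ) * (k / n) := by
    rw [hnj]
    exact mul_pos (by linarith) (div_pos (by linarith) hn)
  have hAB : ((j : ℝ) + 1) * (1 - k / n) ≤ ((n - j : ℕ) : ℝ) * (k / n) := by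
    rw [hnj, ← mul_le_mul_iff_of_pos_left hn]
    field_simp
    nlinarith
  refine le_of_mul_le_mul_right ?_ hB
  rw [← eval_bernsteinPolynomial_succ_mul]
  exact mul_le_mul_of_nonneg_left hAB
    (eval_bernsteinPolynomial_nonneg _ (by positivity) (div_le_one_of_le₀ hk' hn.le))

lemma eval_bernsteinPolynomial_succ_le {k j : ℕ} (hk : k ≤ n) (hj : k ≤ j) :
    (bernsteinPolynomial ℝ n (j + 1)).eval (k / n : ℝ)
      ≤ (bernsteinPolynomial ℝ n j).eval (k / n : ℝ) := by
  have hk' : (k : ℝ) ≤ n := by exact_mod_cast hk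
  have hb : 0 ≤ (bernsteinPolynomial ℝ n j).eval (k / n : ℝ) :=
    eval_bernsteinPolynomial_nonneg _ (by positivity) (div_le_one_of_le₀ hk' (Nat.cast_nonneg n))
  rcases lt_or_ge j n with hjn | hjn
  · have hn : (0 : ℝ) < n := by exact_mod_cast (Nat.zero_le j).trans_lt hjn
    have hjk : (k : ℝ) ≤ j := by exact_mod_cast hj
    have hjn' : (j : ℝ) < n := by exact_mod_cast hjn
    have hnj : ((n - j : ℕ) : ℝ) = n - j := Nat.cast_sub hjn.le
    have hA : 0 < ((j : ℝ) + 1) * (1 - k / n) :=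
      mul_pos (by positivity) (sub_pos.2 ((div_lt_one hn).2 (by linarith)))
    have hBA : ((n - j : ℕ) : ℝ) * (k / n) ≤ ((j : ℝ) + 1) * (1 - k / n) := by
      rw [hnj, ← mul_le_mul_iff_of_pos_left hn]
      field_simp
      nlinarith
    refine le_of_mul_le_mul_right ?_ hA
    rw [eval_bernsteinPolynomial_succ_mul]
    exact mul_le_mul_of_nonneg_left hBA hb
  · simpa [bernsteinPolynomial.eq_zero_of_lt ℝ (Nat.lt_succ_of_le hjn)] using hb

lemma eval_bernsteinPolynomial_le_eval_self {k : ℕ} (hk : k ≤ n) (j : ℕ) :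
    (bernsteinPolynomial ℝ n j).eval (k / n : ℝ) ≤ (bernsteinPolynomial ℝ n k).eval (k / n : ℝ) := by
  set b : ℕ → ℝ := fun i => (bernsteinPolynomial ℝ n i).eval (k / n : ℝ)
  rcases le_total j k with hjk | hkj
  · exact monotoneOn_of_le_succ (f := b) Set.ordConnected_Iic
      (fun i _ _ hi => eval_bernsteinPolynomial_le_succ hk (Order.succ_le_iff.1 hi))
      hjk (Set.mem_Iic.2 le_rfl) hjk
  · exact antitoneOn_nat_Ici_of_succ_le (f := b) (fun i hi => eval_bernsteinPolynomial_succ_le hk hi)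
      (le_refl k) hkj hkj

lemma one_le_succ_mul_eval_bernsteinPolynomial_self {k : ℕ} (hk : k ≤ n) :
    1 ≤ (n + 1) * (bernsteinPolynomial ℝ n k).eval (k / n : ℝ) := by
  calc (1 : ℝ) = ∑ j ∈ range (n + 1), (bernsteinPolynomial ℝ n j).eval (k / n : ℝ) :=
        (sum_eval_bernsteinPolynomial _).symm
    _ ≤ ∑ j ∈ range (n + 1), (bernsteinPolynomial ℝ n k).eval (k / n : ℝ) :=
        sum_le_sum fun j _ => eval_bernsteinPolynomial_le_eval_self hk j
    _ = (n + 1) * (bernsteinPolynomial ℝ n k).eval (k / n : ℝ) := by simp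

lemma eval_bernsteinPolynomial_self_div {k : ℕ} (hk : k ≤ n) :
    (bernsteinPolynomial ℝ n k).eval (k / n : ℝ)
      = n.choose k * exp (-(n * binEntropy (k / n))) := by
  rw [eval_bernsteinPolynomial, mul_assoc]
  congr 1
  rcases Nat.eq_zero_or_pos k with rfl | hk₀
  · simp
  rcases hk.eq_or_lt with rfl | hkn
  · have : (k : ℝ) ≠ 0 := by positivity
    simp [this]
  have hn : (0 : ℝ) < n := by exact_mod_cast hk₀.trans hkn
  have hp₀ : (0 : ℝ) < k / n := by positivity
  have hp₁ : (0 : ℝ) < 1 - k / n := sub_pos.2 ((div_lt_one hn).2 (by exact_mod_cast hkn))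
  rw [← exp_log (mul_pos (pow_pos hp₀ k) (pow_pos hp₁ (n - k))), Real.log_mul (by positivity)
    (by positivity), Real.log_pow, Real.log_pow, Nat.cast_sub hk, binEntropy, Real.log_inv,
    Real.log_inv]
  congr 1
  field_simp
  ring

lemma choose_le_exp_mul_binEntropy {k : ℕ} (hk : k ≤ n) :
    (n.choose k : ℝ) ≤ exp (n * binEntropy (k / n)) := by
  have h : (bernsteinPolynomial ℝ n k).eval (k / n : ℝ) ≤ 1 := by
    rw [← sum_eval_bernsteinPolynomial (n := n) (k / n : ℝ)]
    refine single_le_sum (fun j _ => eval_bernsteinPolynomial_nonneg j ?_ ?_)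
      (mem_range.2 (Nat.lt_succ_of_le hk))
    · positivity
    · exact div_le_one_of_le₀ (by exact_mod_cast hk) (Nat.cast_nonneg n)
  rwa [eval_bernsteinPolynomial_self_div hk, exp_neg, ← div_eq_mul_inv,
    div_le_one (exp_pos _)] at h

lemma exp_mul_binEntropy_le_succ_mul_choose {k : ℕ} (hk : k ≤ n) :
    exp (n * binEntropy (k / n)) ≤ (n + 1) * n.choose k := by
  have h := one_le_succ_mul_eval_bernsteinPolynomial_self hk
  rwa [eval_bernsteinPolynomial_self_div hk, exp_neg, ← mul_assoc, ← div_eq_mul_inv,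
    one_le_div (exp_pos _)] at h

end Binomial

section Laplace

/-- The value of `S_n / n` on a configuration with exactly `k` spins up. -/
noncomputable def upMagnetization (n k : ℕ) : ℝ := (2 * k - n) / n

lemma upMagnetization_mem_Icc {n k : ℕ} (hk : k ≤ n) :
    upMagnetization n k ∈ Set.Icc (-1) 1 := by
  rcases Nat.eq_zero_or_pos n with rfl | hn
  · simp [upMagnetization]
  have hn' : (0 : ℝ) < n := by exact_mod_cast hn
  have hk' : (k : ℝ) ≤ n := by exact_mod_cast hk
  rw [upMagnetization, Set.mem_Icc, le_div_iff₀ hn', div_le_one hn']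
  constructor <;> linarith [(Nat.cast_nonneg k : (0 : ℝ) ≤ k)]

lemma floor_mul_one_add_div_two_le {a : ℝ} (ha : a ∈ Set.Icc (-1) 1) (n : ℕ) :
    ⌊n * (1 + a) / 2⌋₊ ≤ n :=
  Nat.floor_le_of_le (by nlinarith [ha.2, (Nat.cast_nonneg n : (0 : ℝ) ≤ n)])

lemma tendsto_upMagnetization_floor {a : ℝ} (ha : a ∈ Set.Icc (-1) 1) :
    Tendsto (fun n : ℕ => upMagnetization n ⌊n * (1 + a) / 2⌋₊) atTop
      (𝓝[Set.Icc (-1) 1] a) := by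
  refine tendsto_nhdsWithin_iff.2 ⟨?_, Eventually.of_forall fun n =>
    upMagnetization_mem_Icc (floor_mul_one_add_div_two_le ha n)⟩
  have hlow : Tendsto (fun n : ℕ => a - 2 / n) atTop (𝓝 a) := by
    simpa using tendsto_const_nhds.sub (tendsto_const_div_atTop_nhds_zero_nat (2 : ℝ))
  refine tendsto_of_tendsto_of_tendsto_of_le_of_le' hlow tendsto_const_nhds ?_ ?_ <;>
    filter_upwards [eventually_gt_atTop 0] with n hn
  all_goals
    have hn' : (0 : ℝ) < n := by exact_mod_cast hn
    have h₁ := Nat.floor_le (show 0 ≤ n * (1 + a) / 2 by nlinarith [ha.1])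
    have h₂ := Nat.lt_floor_add_one (n * (1 + a) / 2)
    rw [upMagnetization]
  · rw [sub_le_iff_le_add, ← add_div, le_div_iff₀ hn']
    linarith
  · rw [div_le_iff₀ hn']
    linarith

lemma tendsto_succ_sq_mul_exp_neg_mul {c : ℝ} (hc : 0 < c) :
    Tendsto (fun n : ℕ => ((n : ℝ) + 1) ^ 2 * exp (-(c * n))) atTop (𝓝 0) := by
  have h := ((tendsto_rpow_mul_exp_neg_mul_atTop_nhds_zero 2 c hc).comp
    (tendsto_atTop_add_const_right _ 1 tendsto_natCast_atTop_atTop)).const_mul (exp c)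
  rw [mul_zero] at h
  refine h.congr fun n => ?_
  simp only [Function.comp_apply, Real.rpow_two]
  rw [mul_left_comm, ← exp_add]
  ring_nf

lemma abs_sum_mul_div_sum_sub_le {ι : Type*} {s : Finset ι} {w g : ι → ℝ} (p : ι → Prop)
    [DecidablePred p] {L η C : ℝ} (hw : ∀ i ∈ s, 0 ≤ w i) (hZ : 0 < ∑ i ∈ s, w i) (hη : 0 ≤ η)
    (hgood : ∀ i ∈ s, ¬ p i → |g i - L| ≤ η) (hC : ∀ i ∈ s, |g i - L| ≤ C) :
    |(∑ i ∈ s, w i * g i) / ∑ i ∈ s, w i - L|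
      ≤ η + C * ((∑ i ∈ s with p i, w i) / ∑ i ∈ s, w i) := by
  have key : |∑ i ∈ s, w i * (g i - L)| ≤ η * ∑ i ∈ s, w i + C * ∑ i ∈ s with p i, w i := calc
    |∑ i ∈ s, w i * (g i - L)| ≤ ∑ i ∈ s, w i * |g i - L| := by
      refine (abs_sum_le_sum_abs _ _).trans_eq (sum_congr rfl fun i hi => ?_)
      rw [abs_mul, abs_of_nonneg (hw i hi)]
    _ = ∑ i ∈ s with p i, w i * |g i - L| + ∑ i ∈ s with ¬ p i, w i * |g i - L| :=
      (sum_filter_add_sum_filter_not s p _).symm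
    _ ≤ ∑ i ∈ s with p i, w i * C + ∑ i ∈ s with ¬ p i, w i * η := by
      gcongr with i hi i hi
      · exact hw i (mem_filter.1 hi).1
      · exact hC i (mem_filter.1 hi).1
      · exact hw i (mem_filter.1 hi).1
      · exact hgood i (mem_filter.1 hi).1 (mem_filter.1 hi).2
    _ ≤ C * ∑ i ∈ s with p i, w i + η * ∑ i ∈ s, w i := by
      rw [← sum_mul, ← sum_mul, mul_comm, mul_comm _ η]
      gcongr
      · exact fun i hi _ => hw i hi
      · exact filter_subset _ _
    _ = _ := add_comm _ _
  have hsplit : (∑ i ∈ s, w i * g i) / ∑ i ∈ s, w i - L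
      = (∑ i ∈ s, w i * (g i - L)) / ∑ i ∈ s, w i := by
    simp only [mul_sub, sum_sub_distrib, ← sum_mul]
    field_simp
  rw [hsplit, abs_div, abs_of_pos hZ, div_le_iff₀ hZ]
  calc _ ≤ _ := key
    _ = _ := by field_simp

lemma pos_of_exp_le_succ_mul {n : ℕ} {x y : ℝ} (h : exp x ≤ (n + 1) * y) : 0 < y :=
  pos_of_mul_pos_right ((exp_pos x).trans_le h) (by positivity)

variable {F : ℝ → ℝ}

lemma sum_filter_div_sum_le {n : ℕ} (hn : 0 < n) (w : ℕ → ℝ) {c δ : ℝ} {B : Set ℝ}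
    [DecidablePred (· ∈ B)] (hw_le : ∀ k ≤ n, w k ≤ exp (n * F (upMagnetization n k)))
    (hw_ge : ∀ k ≤ n, exp (n * F (upMagnetization n k)) ≤ (n + 1) * w k)
    (hB : ∀ k ≤ n, upMagnetization n k ∈ B → F (upMagnetization n k) ≤ c - δ)
    {k₀ : ℕ} (hk₀ : k₀ ≤ n) (hk₀F : c - δ / 2 ≤ F (upMagnetization n k₀)) :
    (∑ k ∈ range (n + 1) with upMagnetization n k ∈ B, w k) / ∑ k ∈ range (n + 1), w k
      ≤ ((n : ℝ) + 1) ^ 2 * exp (-(δ / 2 * n)) := by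
  have hw_pos : ∀ k ∈ range (n + 1), 0 < w k := fun k hk =>
    pos_of_exp_le_succ_mul (hw_ge k (Nat.lt_succ_iff.1 (mem_range.1 hk)))
  set Z := ∑ k ∈ range (n + 1), w k
  have hZ : exp (n * (c - δ / 2)) / (n + 1) ≤ Z := calc
    exp (n * (c - δ / 2)) / (n + 1) ≤ exp (n * F (upMagnetization n k₀)) / (n + 1) := by gcongr
    _ ≤ w k₀ := by rw [div_le_iff₀' (by positivity)]; exact hw_ge k₀ hk₀
    _ ≤ Z := single_le_sum (fun k hk => (hw_pos k hk).le) (mem_range.2 (Nat.lt_succ_of_le hk₀))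
  have hBad : ∑ k ∈ range (n + 1) with upMagnetization n k ∈ B, w k
      ≤ (n + 1) * exp (n * (c - δ)) := calc
    _ ≤ ∑ k ∈ range (n + 1) with upMagnetization n k ∈ B, exp (n * (c - δ)) := by
      refine sum_le_sum fun k hk => ?_
      obtain ⟨hk, hkB⟩ := mem_filter.1 hk
      have hkn := Nat.lt_succ_iff.1 (mem_range.1 hk)
      refine (hw_le k hkn).trans (exp_le_exp.2 ?_)
      gcongr
      exact hB k hkn hkB
    _ ≤ (n + 1) * exp (n * (c - δ)) := by
      rw [sum_const, nsmul_eq_mul]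
      gcongr
      exact_mod_cast (card_filter_le _ _).trans (card_range _).le
  rw [div_le_iff₀ (sum_pos hw_pos ⟨0, by simp⟩)]
  calc _ ≤ (n + 1) * exp (n * (c - δ)) := hBad
    _ = ((n : ℝ) + 1) ^ 2 * exp (-(δ / 2 * n)) * (exp (n * (c - δ / 2)) / (n + 1)) := by
      rw [mul_div_assoc', mul_assoc, ← exp_add]
      field_simp
      ring_nf
    _ ≤ ((n : ℝ) + 1) ^ 2 * exp (-(δ / 2 * n)) * Z := by gcongr

variable {a : ℝ} (w : ℕ → ℕ → ℝ)

theorem tendsto_sum_filter_div_sum_of_lt (hF : ContinuousOn F (Set.Icc (-1) 1))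
    (ha : a ∈ Set.Icc (-1) 1) {B : Set ℝ} [DecidablePred (· ∈ B)] (hB : IsClosed B)
    (hFB : ∀ x ∈ Set.Icc (-1) 1 ∩ B, F x < F a)
    (hw_le : ∀ n k, 0 < n → k ≤ n → w n k ≤ exp (n * F (upMagnetization n k)))
    (hw_ge : ∀ n k, 0 < n → k ≤ n → exp (n * F (upMagnetization n k)) ≤ (n + 1) * w n k) :
    Tendsto (fun n => (∑ k ∈ range (n + 1) with upMagnetization n k ∈ B, w n k)
      / ∑ k ∈ range (n + 1), w n k) atTop (𝓝 0) := by
  obtain ⟨δ, hδ, hgap⟩ : ∃ δ > 0, ∀ x ∈ Set.Icc (-1) 1 ∩ B, δ ≤ F a - F x :=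
    (isCompact_Icc.inter_right hB).exists_forall_le'
      (continuousOn_const.sub (hF.mono Set.inter_subset_left)) fun x hx => sub_pos.2 (hFB x hx)
  have hnear : ∀ᶠ n : ℕ in atTop, F a - δ / 2 < F (upMagnetization n ⌊n * (1 + a) / 2⌋₊) :=
    ((hF a ha).tendsto.comp (tendsto_upMagnetization_floor ha)).eventually
      (eventually_gt_nhds (by linarith))
  refine squeeze_zero' ?_ ?_ (tendsto_succ_sq_mul_exp_neg_mul (half_pos hδ)) <;>
    filter_upwards [hnear, eventually_gt_atTop 0] with n hn hn₀
  · have hw : ∀ k ∈ range (n + 1), 0 ≤ w n k := fun k hk =>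
      (pos_of_exp_le_succ_mul (hw_ge n k hn₀ (Nat.lt_succ_iff.1 (mem_range.1 hk)))).le
    exact div_nonneg (sum_nonneg fun k hk => hw k (mem_filter.1 hk).1) (sum_nonneg hw)
  · exact sum_filter_div_sum_le hn₀ (w n) (hw_le n · hn₀) (hw_ge n · hn₀)
      (fun k hk hkB => by linarith [hgap _ ⟨upMagnetization_mem_Icc hk, hkB⟩])
      (floor_mul_one_add_div_two_le ha n) hn.le

/-- Laplace's method on the grid of magnetizations: weights of size `exp (n F)` concentrate where
`F` is maximal, and `g = L` there. -/
theorem tendsto_sum_mul_div_sum_of_laplace {g : ℝ → ℝ} {L : ℝ}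
    (hF : ContinuousOn F (Set.Icc (-1) 1)) (hg : ContinuousOn g (Set.Icc (-1) 1))
    (ha : a ∈ Set.Icc (-1) 1) (hFg : ∀ x ∈ Set.Icc (-1) 1, g x ≠ L → F x < F a)
    (hw_le : ∀ n k, 0 < n → k ≤ n → w n k ≤ exp (n * F (upMagnetization n k)))
    (hw_ge : ∀ n k, 0 < n → k ≤ n → exp (n * F (upMagnetization n k)) ≤ (n + 1) * w n k) :
    Tendsto (fun n => (∑ k ∈ range (n + 1), w n k * g (upMagnetization n k))
      / ∑ k ∈ range (n + 1), w n k) atTop (𝓝 L) := by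
  classical
  rw [Metric.tendsto_atTop]
  intro ε hε
  obtain ⟨C, hC⟩ := isCompact_Icc.exists_bound_of_continuousOn (hg.sub continuousOn_const)
  simp only [Real.norm_eq_abs] at hC
  have hC₀ : 0 ≤ C := (abs_nonneg _).trans (hC a ha)
  set B := Set.Icc (-1) 1 ∩ (fun x => |g x - L|) ⁻¹' Set.Ici (ε / 2)
  have hB : IsClosed B :=
    (hg.sub continuousOn_const).abs.preimage_isClosed_of_isClosed isClosed_Icc isClosed_Ici
  have hFB : ∀ x ∈ Set.Icc (-1) 1 ∩ B, F x < F a := fun x hx =>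
    hFg x hx.1 fun hgx => by
      have := hx.2.2
      simp only [Set.mem_preimage, Set.mem_Ici, hgx, sub_self, abs_zero] at this
      linarith
  have htail := (tendsto_sum_filter_div_sum_of_lt w hF ha hB hFB hw_le hw_ge).eventually
    (gt_mem_nhds (show (0 : ℝ) < ε / 2 / (C + 1) by positivity))
  obtain ⟨N, hN⟩ := eventually_atTop.1 (htail.and (eventually_gt_atTop 0))
  refine ⟨N, fun n hn => ?_⟩
  obtain ⟨hsmall, hn₀⟩ := hN n hn
  have hw_pos : ∀ k ∈ range (n + 1), 0 < w n k := fun k hk =>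
    pos_of_exp_le_succ_mul (hw_ge n k hn₀ (Nat.lt_succ_iff.1 (mem_range.1 hk)))
  have hmem : ∀ k ∈ range (n + 1), upMagnetization n k ∈ Set.Icc (-1) 1 := fun k hk =>
    upMagnetization_mem_Icc (Nat.lt_succ_iff.1 (mem_range.1 hk))
  rw [Real.dist_eq]
  refine (abs_sum_mul_div_sum_sub_le (fun k => upMagnetization n k ∈ B)
    (fun k hk => (hw_pos k hk).le) (sum_pos hw_pos ⟨0, by simp⟩) (half_pos hε).le
    (fun k hk hkB => ?_) (fun k hk => hC (upMagnetization n k) (hmem k hk))).trans_lt ?_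
  · by_contra h
    exact hkB ⟨hmem k hk, (not_le.1 h).le⟩
  · have : C * (ε / 2 / (C + 1)) < ε / 2 := by
      rw [mul_div_assoc', div_lt_iff₀ (by positivity)]
      nlinarith
    linarith [mul_le_mul_of_nonneg_left hsmall.le hC₀]

end Laplace

section Spins

variable {n : ℕ}

lemma spin_not (b : Bool) : spin (!b) = -spin b := by
  cases b <;> simp [spin]

lemma sum_spin_eq (σ : Fin n → Bool) : ∑ i, spin (σ i) = 2 * #{i | σ i} - n := by
  have h : ∀ b, spin b = 2 * (if b then 1 else 0) - 1 := by
    intro b; cases b <;> norm_num [spin]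
  rw [sum_congr rfl fun i _ => h (σ i), sum_sub_distrib, ← mul_sum, sum_boole]
  simp

lemma sum_comp_sum_spin (f : ℝ → ℝ) :
    ∑ σ : Fin n → Bool, f (∑ i, spin (σ i)) = ∑ k ∈ range (n + 1), n.choose k * f (2 * k - n) := by
  let e : (Fin n → Bool) ≃ Finset (Fin n) :=
    { toFun := fun σ => {i | σ i}
      invFun := fun s i => decide (i ∈ s)
      left_inv := fun σ => by ext i; simp
      right_inv := fun s => by ext i; simp }
  calc ∑ σ : Fin n → Bool, f (∑ i, spin (σ i))
      = ∑ s : Finset (Fin n), f (2 * #s - n) := by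
        refine Fintype.sum_equiv e _ _ fun σ => ?_
        rw [sum_spin_eq]
        rfl
    _ = ∑ k ∈ range (n + 1), n.choose k * f (2 * k - n) := by
        rw [← powerset_univ, sum_powerset_apply_card (fun k => f (2 * k - n)), card_univ,
          Fintype.card_fin]
        simp only [nsmul_eq_mul]

lemma cwWeight_not (β : ℝ) (σ : Fin n → Bool) :
    cwWeight β n (fun i => !σ i) = cwWeight β n σ := by
  simp [cwWeight, spin_not, sum_neg_distrib]

lemma cwExp_eq_zero_of_not {β : ℝ} {f : (Fin n → Bool) → ℝ}
    (hf : ∀ σ, f (fun i => !σ i) = -f σ) : cwExp β n f = 0 := by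
  let e := Function.Involutive.toPerm (fun (σ : Fin n → Bool) i => !σ i) fun σ => by simp
  have h : ∑ σ, cwWeight β n σ * f σ = -∑ σ, cwWeight β n σ * f σ := by
    rw [← sum_neg_distrib]
    refine Fintype.sum_equiv e _ _ fun σ => ?_
    change _ = -(cwWeight β n (fun i => !σ i) * f (fun i => !σ i))
    rw [cwWeight_not, hf, mul_neg, neg_neg]
  rw [cwExp, show ∑ σ, cwWeight β n σ * f σ = 0 by linarith, zero_div]

end Spins

section FreeEnergy

noncomputable def cwMagnetizationWeight (β : ℝ) (n k : ℕ) : ℝ :=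
  n.choose k * exp (β / (2 * n) * (2 * k - n) ^ 2)

lemma cwExp_comp_magnetization (β : ℝ) (n : ℕ) (g : ℝ → ℝ) :
    cwExp β n (fun σ => g ((∑ i, spin (σ i)) / n))
      = (∑ k ∈ range (n + 1), cwMagnetizationWeight β n k * g (upMagnetization n k))
        / ∑ k ∈ range (n + 1), cwMagnetizationWeight β n k := by
  rw [cwExp, cwZ]
  simp only [cwWeight]
  rw [sum_comp_sum_spin (fun x => exp (β / (2 * n) * x ^ 2) * g (x / n)),
    sum_comp_sum_spin (fun x => exp (β / (2 * n) * x ^ 2))]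
  simp only [cwMagnetizationWeight, upMagnetization, mul_assoc]

/-- The exponential growth rate of `cwMagnetizationWeight` at magnetization `s`. -/
noncomputable def cwFreeEnergy (β s : ℝ) : ℝ := β * s ^ 2 / 2 + binEntropy ((1 + s) / 2)

lemma exp_mul_cwFreeEnergy_upMagnetization (β : ℝ) {n : ℕ} (hn : 0 < n) (k : ℕ) :
    exp (n * cwFreeEnergy β (upMagnetization n k))
      = exp (β / (2 * n) * (2 * k - n) ^ 2) * exp (n * binEntropy (k / n)) := by
  have hn' : (n : ℝ) ≠ 0 := by positivity
  have hp : (1 + upMagnetization n k) / 2 = k / n := by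
    rw [upMagnetization]; field_simp; ring
  rw [cwFreeEnergy, hp, ← exp_add, upMagnetization]
  congr 1
  field_simp

lemma cwMagnetizationWeight_le (β : ℝ) {n k : ℕ} (hn : 0 < n) (hk : k ≤ n) :
    cwMagnetizationWeight β n k ≤ exp (n * cwFreeEnergy β (upMagnetization n k)) := by
  rw [exp_mul_cwFreeEnergy_upMagnetization β hn, cwMagnetizationWeight, mul_comm]
  gcongr
  exact choose_le_exp_mul_binEntropy hk

lemma exp_le_succ_mul_cwMagnetizationWeight (β : ℝ) {n k : ℕ} (hn : 0 < n) (hk : k ≤ n) :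
    exp (n * cwFreeEnergy β (upMagnetization n k)) ≤ (n + 1) * cwMagnetizationWeight β n k := by
  rw [exp_mul_cwFreeEnergy_upMagnetization β hn, cwMagnetizationWeight, mul_comm, ← mul_assoc]
  gcongr
  exact exp_mul_binEntropy_le_succ_mul_choose hk

@[fun_prop]
lemma continuous_cwFreeEnergy (β : ℝ) : Continuous (cwFreeEnergy β) := by
  unfold cwFreeEnergy; fun_prop

lemma cwFreeEnergy_neg (β s : ℝ) : cwFreeEnergy β (-s) = cwFreeEnergy β s := by
  rw [cwFreeEnergy, cwFreeEnergy, ← binEntropy_one_sub ((1 + s) / 2)]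
  ring_nf

lemma hasDerivAt_cwFreeEnergy (β : ℝ) {s : ℝ} (hs : s ∈ Set.Ioo (-1) 1) :
    HasDerivAt (cwFreeEnergy β) (β * s - artanh s) s := by
  obtain ⟨hs₁, hs₂⟩ := hs
  have hp : HasDerivAt (fun x : ℝ => (1 + x) / 2) (1 / 2) s := by
    simpa using ((hasDerivAt_id s).const_add 1).div_const 2
  have hH := (hasDerivAt_binEntropy (p := (1 + s) / 2) (by linarith) (by linarith)).comp s hp
  have hQ : HasDerivAt (fun x : ℝ => β * x ^ 2 / 2) (β * s) s := by
    refine (((hasDerivAt_pow 2 s).const_mul β).div_const 2).congr_deriv ?_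
    push_cast
    ring
  refine (hQ.add hH).congr_deriv ?_
  rw [artanh_eq_half_log ⟨hs₁.le, hs₂.le⟩, show 1 - (1 + s) / 2 = (1 - s) / 2 by ring,
    Real.log_div (x := 1 + s) (y := 1 - s) (by linarith) (by linarith),
    Real.log_div (x := 1 - s) (y := 2) (by linarith) two_ne_zero,
    Real.log_div (x := 1 + s) (y := 2) (by linarith) two_ne_zero]
  ring

end FreeEnergy

section FixedPoint

@[fun_prop]
lemma Real.continuous_tanh : Continuous tanh := by
  simp_rw [funext tanh_eq_sinh_div_cosh]
  exact continuous_sinh.div continuous_cosh fun x => (cosh_pos x).ne'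

lemma IsPreconnected.pos_of_ne_zero {X : Type*} [TopologicalSpace X] {S : Set X}
    (hS : IsPreconnected S) {f : X → ℝ} (hf : ContinuousOn f S) (h₀ : ∀ x ∈ S, f x ≠ 0) {a : X}
    (ha : a ∈ S) (hfa : 0 < f a) {x : X} (hx : x ∈ S) : 0 < f x := by
  by_contra! h
  obtain ⟨y, hy, hy₀⟩ := hS.intermediate_value hx ha hf ⟨h, hfa.le⟩
  exact h₀ y hy hy₀

lemma lt_tanh_mul_of_sq_lt {β s : ℝ} (hβ : 0 < β) (hs : 0 < s) (h : (β * s) ^ 2 / 2 < log β) :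
    s < tanh (β * s) := by
  rw [tanh_eq_sinh_div_cosh, lt_div_iff₀ (cosh_pos _)]
  calc s * cosh (β * s) ≤ s * exp ((β * s) ^ 2 / 2) := by gcongr; exact cosh_le_exp_half_sq _
    _ < s * β := by gcongr; rwa [← exp_lt_exp, exp_log hβ] at h
    _ = β * s := mul_comm _ _
    _ ≤ sinh (β * s) := self_le_sinh_iff.2 (by positivity)

lemma exists_lt_tanh_mul {β m : ℝ} (hβ : 1 < β) (hm : 0 < m) :
    ∃ s ∈ Set.Ioo 0 m, s < tanh (β * s) := by
  have hsmall : ∀ᶠ s in 𝓝 (0 : ℝ), (β * s) ^ 2 / 2 < log β := by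
    refine (Continuous.tendsto (by fun_prop) 0).eventually (gt_mem_nhds ?_)
    simpa using log_pos hβ
  obtain ⟨s, hs, hsm⟩ :=
    ((eventually_nhdsWithin_of_eventually_nhds hsmall).and (Ioo_mem_nhdsGT hm)).exists
  exact ⟨s, hsm, lt_tanh_mul_of_sq_lt (by linarith) hsm.1 hs⟩

variable {β m : ℝ}

lemma lt_tanh_mul_of_mem_Ioo (hβ : 1 < β) (hm : 0 < m)
    (hm_unique : ∀ x : ℝ, 0 < x → tanh (β * x) = x → x = m) {s : ℝ} (hs : s ∈ Set.Ioo 0 m) :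
    s < tanh (β * s) := by
  obtain ⟨s₀, hs₀, hs₀_lt⟩ := exists_lt_tanh_mul hβ hm
  refine sub_pos.1 (isPreconnected_Ioo.pos_of_ne_zero (f := fun x => tanh (β * x) - x)
    (by fun_prop) (fun x hx h => ?_) hs₀ (sub_pos.2 hs₀_lt) hs)
  exact hx.2.ne (hm_unique x hx.1 (sub_eq_zero.1 h))

lemma tanh_mul_lt_of_lt (hm : 0 < m) (hm_fix : tanh (β * m) = m)
    (hm_unique : ∀ x : ℝ, 0 < x → tanh (β * x) = x → x = m) {s : ℝ} (hs : m < s) :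
    tanh (β * s) < s := by
  have hm₁ : m < 1 := hm_fix ▸ tanh_lt_one _
  refine sub_pos.1 (isPreconnected_Ioi.pos_of_ne_zero (f := fun x => x - tanh (β * x))
    (by fun_prop) (fun x hx h => ?_) (Set.mem_Ioi.2 hm₁) (sub_pos.2 (tanh_lt_one _)) hs)
  exact (Set.mem_Ioi.1 hx).ne' (hm_unique x (hm.trans hx) (sub_eq_zero.1 h).symm)

lemma strictMonoOn_cwFreeEnergy (hβ : 1 < β) (hm : 0 < m) (hm_fix : tanh (β * m) = m)
    (hm_unique : ∀ x : ℝ, 0 < x → tanh (β * x) = x → x = m) :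
    StrictMonoOn (cwFreeEnergy β) (Set.Icc 0 m) := by
  have hm₁ : m < 1 := hm_fix ▸ tanh_lt_one _
  refine strictMonoOn_of_deriv_pos (convex_Icc 0 m) (continuous_cwFreeEnergy β).continuousOn
    fun s hs => ?_
  rw [interior_Icc] at hs
  rw [(hasDerivAt_cwFreeEnergy β ⟨by linarith [hs.1], by linarith [hs.2]⟩).deriv, sub_pos,
    ← artanh_tanh (β * s)]
  exact artanh_lt_artanh (by linarith [hs.1]) (tanh_lt_one _)
    (lt_tanh_mul_of_mem_Ioo hβ hm hm_unique hs)

lemma strictAntiOn_cwFreeEnergy (hm : 0 < m) (hm_fix : tanh (β * m) = m)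
    (hm_unique : ∀ x : ℝ, 0 < x → tanh (β * x) = x → x = m) :
    StrictAntiOn (cwFreeEnergy β) (Set.Icc m 1) := by
  refine strictAntiOn_of_deriv_neg (convex_Icc m 1) (continuous_cwFreeEnergy β).continuousOn
    fun s hs => ?_
  rw [interior_Icc] at hs
  rw [(hasDerivAt_cwFreeEnergy β ⟨by linarith [hs.1], hs.2⟩).deriv, sub_neg,
    ← artanh_tanh (β * s)]
  exact artanh_lt_artanh (neg_one_lt_tanh _) hs.2 (tanh_mul_lt_of_lt hm hm_fix hm_unique hs.1)

lemma cwFreeEnergy_lt_of_ne (hβ : 1 < β) (hm : 0 < m) (hm_fix : tanh (β * m) = m)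
    (hm_unique : ∀ x : ℝ, 0 < x → tanh (β * x) = x → x = m) {s : ℝ} (hs : s ∈ Set.Icc (-1) 1)
    (h₁ : s ≠ m) (h₂ : s ≠ -m) : cwFreeEnergy β s < cwFreeEnergy β m := by
  have hm₁ : m < 1 := hm_fix ▸ tanh_lt_one _
  have key : ∀ t ∈ Set.Icc (0 : ℝ) 1, t ≠ m → cwFreeEnergy β t < cwFreeEnergy β m := by
    intro t ht htm
    rcases htm.lt_or_gt with h | h
    · exact strictMonoOn_cwFreeEnergy hβ hm hm_fix hm_unique ⟨ht.1, h.le⟩ ⟨hm.le, le_rfl⟩ h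
    · exact strictAntiOn_cwFreeEnergy hm hm_fix hm_unique ⟨le_rfl, hm₁.le⟩ ⟨h.le, ht.2⟩ h
  rcases le_total 0 s with h | h
  · exact key s ⟨h, hs.2⟩ h₁
  · rw [← cwFreeEnergy_neg]
    exact key (-s) ⟨by linarith, by linarith [hs.1]⟩ fun h' => h₂ (by linarith)

end FixedPoint

/-- Moment convergence for the magnetization, supercritical case: for `β > 1`,
`E_{β,N}((S_N/N)^K)` converges to `m(β)^K` for even `K` and to `0` for odd `K`, where
`m(β) > 0` is the unique positive solution of `x = tanh (β x)`; these are the moments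
of `(1/2)(δ_{−m(β)} + δ_{m(β)})`. -/
theorem cw_magnetization_moments_supercritical (β : ℝ) (hβ : 1 < β)
    (m : ℝ) (hm : 0 < m) (hm_fix : Real.tanh (β * m) = m)
    (hm_unique : ∀ x : ℝ, 0 < x → Real.tanh (β * x) = x → x = m) (K : ℕ) :
    Tendsto (fun N : ℕ => cwExp β N (fun σ => ((∑ i, spin (σ i)) / N) ^ K))
      atTop (𝓝 (if Even K then m ^ K else 0)) := by
  rcases Nat.even_or_odd K with hK | hK
  · rw [if_pos hK]
    have hm₁ : m < 1 := hm_fix ▸ tanh_lt_one _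
    refine (tendsto_sum_mul_div_sum_of_laplace (cwMagnetizationWeight β)
      (continuous_cwFreeEnergy β).continuousOn (continuous_pow K).continuousOn
      ⟨by linarith, hm₁.le⟩ (fun x hx hne => ?_) (fun n k => cwMagnetizationWeight_le β)
      (fun n k => exp_le_succ_mul_cwMagnetizationWeight β)).congr
      fun n => (cwExp_comp_magnetization β n (· ^ K)).symm
    refine cwFreeEnergy_lt_of_ne hβ hm hm_fix hm_unique hx ?_ ?_ <;> rintro rfl
    · exact hne rfl
    · exact hne (hK.neg_pow m)
  · rw [if_neg (Nat.not_even_iff_odd.2 hK)]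
    refine tendsto_const_nhds.congr fun n => (cwExp_eq_zero_of_not fun σ => ?_).symm
    rw [sum_congr rfl fun i _ => spin_not (σ i), sum_neg_distrib, neg_div, hK.neg_pow]
end
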